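/- arXiv:1107.1523 — 4 statements merged into one kernel-verified Lean document; each statement's English description precedes it below -/
import Mathlib

section
/- Let X ⊂ ℝ^d be compact and f : X → X an invertible piecewise area preserving map with topological partition P = {ω_0,…,ω_{r−1}}. If the set nom(f) of nomadic points of f has positive Lebesgue measure, then every absolutely continuous invariant probability measure of f whose Radon–Nikodym density with respect to m has an m-almost everywhere continuous representative is equal to m; that is, M_IC(f) = {m}. -/
open MeasureTheory Set Function Metric Filter Topology

noncomputable section

abbrev Euc (d : ℕ) := EuclideanSpace ℝ (Fin d)

/-- The full `ℤ`-orbit of `x` under an invertible map `f` of `X`: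
`y` belongs to it iff `y ∈ X` and `f^[p] y = f^[q] x` for some `p q : ℕ`
(for a bijection of `X` this is exactly `{f^i(x) : i ∈ ℤ}`). -/
def fullOrbit {α : Type*} (X : Set α) (f : α → α) (x : α) : Set α :=
  {y ∈ X | ∃ p q : ℕ, f^[p] y = f^[q] x}

/-- `x` is a nomadic point of `f : X → X`: its full orbit is dense in `X`. -/
def Nomadic {α : Type*} [TopologicalSpace α] (X : Set α) (f : α → α) (x : α) : Prop :=
  x ∈ X ∧ X ⊆ closure (fullOrbit X f x)

/-- `A` is a relatively open subset of `X`. -/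
def RelOpen {α : Type*} [TopologicalSpace α] (X A : Set α) : Prop :=
  ∃ U, IsOpen U ∧ A = X ∩ U

/-- The interior of `A` relative to the subspace `X`. -/
def RelInterior {α : Type*} [TopologicalSpace α] (X A : Set α) : Set α :=
  {x ∈ X ∩ A | ∃ U, IsOpen U ∧ x ∈ U ∧ X ∩ U ⊆ A}

/-- `f^n(U)` for `n : ℤ`, for an invertible map `f` of `X`. -/
def iterImage {α : Type*} (X : Set α) (f : α → α) (n : ℤ) (U : Set α) : Set α :=
  if 0 ≤ n then f^[n.toNat] '' U else {y ∈ X | f^[(-n).toNat] y ∈ U}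

/-- A topological partition of `X`: pairwise disjoint atoms covering `X`, each with
nonempty interior and Lebesgue-null boundary. -/
def IsTopPartition {d : ℕ} (X : Set (Euc d)) {r : ℕ} (ω : Fin r → Set (Euc d)) : Prop :=
  (Pairwise fun i j => Disjoint (ω i) (ω j)) ∧ (⋃ i, ω i) = X ∧
    (∀ i, (interior (ω i)).Nonempty) ∧ ∀ i, volume (frontier (ω i)) = 0

/-- A piecewise area preserving map with partition `ω`, nonsingular w.r.t. `m`:
measurable, null sets pull back and push forward to null sets, `C¹` on atom
interiors with `|det Df| ≡ 1` there. -/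
def IsPAP {d r : ℕ} (X : Set (Euc d)) (f : Euc d → Euc d) (ω : Fin r → Set (Euc d))
    (m : Measure (Euc d)) : Prop :=
  MapsTo f X X ∧ Measurable f ∧
    (∀ A : Set (Euc d), MeasurableSet A → m A = 0 → m (f ⁻¹' A) = 0 ∧ m (f '' A) = 0) ∧
    (∀ i, ContDiffOn ℝ 1 f (interior (ω i))) ∧
    (∀ i, ∀ x ∈ interior (ω i), |(fderiv ℝ f x).det| = 1)

/-- divergence of a vector field on `ℝ^d`. -/
def divg {d : ℕ} (φ : Euc d → Euc d) (x : Euc d) : ℝ :=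
  ∑ i, fderiv ℝ φ x (EuclideanSpace.single i 1) i

/-- the set of numbers `∫_Ω η · div φ dm` over test vector fields
`φ ∈ C¹_c(Ω, ℝ^d)` with `‖φ‖_∞ ≤ 1`; its supremum is `var(η)`. -/
def varSet {d : ℕ} (Ω : Set (Euc d)) (η : Euc d → ℝ) : Set ℝ :=
  {v | ∃ φ : Euc d → Euc d, ContDiff ℝ 1 φ ∧ HasCompactSupport φ ∧ tsupport φ ⊆ Ω ∧
    (∀ x, ‖φ x‖ ≤ 1) ∧ v = ∫ x in Ω, η x * divg φ x}

/-- `η ∈ BV(Ω)` : integrable on `Ω` with finite variation `var(η) < ∞`. -/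
def IsBVOn {d : ℕ} (Ω : Set (Euc d)) (η : Euc d → ℝ) : Prop :=
  IntegrableOn η Ω volume ∧ BddAbove (varSet Ω η)

/-- the invariant σ-field `I = {B Borel : f⁻¹(B) = B mod m}`. -/
def invariantSigma {α : Type*} [MeasurableSpace α] (f : α → α) (m : Measure α) :
    MeasurableSpace α :=
  MeasurableSpace.generateFrom {B | MeasurableSet B ∧ m (symmDiff B (f ⁻¹' B)) = 0}

/-- interval exchange transformation of `[0,1)`. -/
def IsIET (T : ℝ → ℝ) : Prop :=
  Set.BijOn T (Set.Ico 0 1) (Set.Ico 0 1) ∧ Measurable T ∧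
    ∃ (r : ℕ) (β : Fin (r + 1) → ℝ) (γ : Fin r → ℝ),
      StrictMono β ∧ β 0 = 0 ∧ β (Fin.last r) = 1 ∧
      ∀ i : Fin r, ∀ x ∈ Set.Ico (β i.castSucc) (β i.succ), T x = x + γ i

/-- piecewise rotation of a compact `X ⊆ ℂ` with convex atoms `ω`:
`f(x) = ρ_j x + z_j` on `ω_j`, `|ρ_j| = 1`. -/
def IsPiecewiseRotation {r : ℕ} (X : Set ℂ) (f : ℂ → ℂ) (ω : Fin r → Set ℂ) : Prop :=
  MapsTo f X X ∧ Measurable f ∧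
    (Pairwise fun i j => Disjoint (ω i) (ω j)) ∧ (⋃ i, ω i) = X ∧
    (∀ i, Convex ℝ (ω i)) ∧
    ∃ ρ z : Fin r → ℂ, (∀ i, ‖ρ i‖ = 1) ∧ ∀ i, ∀ x ∈ ω i, f x = ρ i * x + z i

/-- piecewise isometry: on each atom interior, `f` is a Euclidean isometry `x ↦ A x + c`
with `A` orthogonal. -/
def IsPWI {d r : ℕ} (X : Set (Euc d)) (f : Euc d → Euc d) (ω : Fin r → Set (Euc d)) : Prop :=
  MapsTo f X X ∧ Measurable f ∧ IsTopPartition X ω ∧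
    ∀ i, ∃ (A : Euc d ≃ₗᵢ[ℝ] Euc d) (c : Euc d), ∀ x ∈ interior (ω i), f x = A x + c


open scoped ENNReal NNReal in
private lemma meas_union_null' {α : Type*} [MeasurableSpace α] {μ : MeasureTheory.Measure α}
    {s t : Set α} (ht : μ t = 0) : μ (s ∪ t) = μ s :=
  le_antisymm ((MeasureTheory.measure_union_le s t).trans (by simp [ht]))
    (MeasureTheory.measure_mono Set.subset_union_left)

open scoped ENNReal NNReal

/-- if the nomadic set of an invertible PAP has positive Lebesgue measure,
then `M_IC(f) = {m}`. -/
theorem stmt0 {d r : ℕ} (X : Set (Euc d)) (hXc : IsCompact X)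
    (f : Euc d → Euc d) (ω : Fin r → Set (Euc d))
    (m : Measure (Euc d)) (hm : m = (volume X)⁻¹ • volume.restrict X)
    (hpart : IsTopPartition X ω) (hPAP : IsPAP X f ω m) (hbij : Set.BijOn f X X)
    (hnom : 0 < m {x | Nomadic X f x})
    (μ : Measure (Euc d)) (hμp : IsProbabilityMeasure μ) (hac : μ ≪ m)
    (hinv : ∀ A : Set (Euc d), MeasurableSet A → μ (f ⁻¹' A) = μ A)
    (φ : Euc d → ℝ) (hrep : ∀ᵐ x ∂m, φ x = (μ.rnDeriv m x).toReal)
    (hcont : ∀ᵐ x ∂m, ContinuousWithinAt φ X x) :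
    μ = m := by
  obtain ⟨hdisj, hcover, hint, hfr⟩ := hpart
  obtain ⟨hmaps, hfmeas, hnonsing, hC1, hdet⟩ := hPAP
  have hXm : MeasurableSet X := hXc.isClosed.measurableSet
  have hinj : InjOn f X := hbij.injOn
  -- `r = 0` is impossible / gives `X = ∅`
  rcases Nat.eq_zero_or_pos r with hr | hr
  · subst hr
    have hXe : X = ∅ := by simpa using hcover.symm
    rw [hm, hXe] at hnom
    simp at hnom
  -- volume of X is positive and finite
  have hsubX : ∀ i, ω i ⊆ X := fun i => hcover ▸ subset_iUnion ω i
  have hvolpos : 0 < volume X := by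
    have i0 : Fin r := ⟨0, hr⟩
    obtain ⟨x, hx⟩ := hint i0
    have : 0 < volume (interior (ω i0)) := isOpen_interior.measure_pos volume ⟨x, hx⟩
    exact this.trans_le (measure_mono ((interior_subset).trans (hsubX i0)))
  have hvolfin : volume X ≠ ⊤ := hXc.measure_lt_top.ne
  have hcne : (volume X)⁻¹ ≠ 0 := by simp [hvolfin]
  have hcfin : (volume X)⁻¹ ≠ ⊤ := by simp [hvolpos.ne']
  -- basic facts about m
  have hmval : ∀ S, m S = (volume X)⁻¹ * volume (S ∩ X) := by
    intro S
    rw [hm, Measure.smul_apply, Measure.restrict_apply' hXm]; rfl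
  have hmXc : m Xᶜ = 0 := by
    rw [hmval]; simp
  have hmvol : ∀ S, S ⊆ X → (m S = 0 ↔ volume S = 0) := by
    intro S hS
    rw [hmval, inter_eq_self_of_subset_left hS]
    simp [hcne, hcfin]
  have hmuniv : m univ = 1 := by
    rw [hmval]; simp [ENNReal.inv_mul_cancel hvolpos.ne' hvolfin]
  have hmprob : IsProbabilityMeasure m := ⟨hmuniv⟩
  -- measurability of images
  have himg_meas : ∀ B : Set (Euc d), MeasurableSet B → B ⊆ X → MeasurableSet (f '' B) :=
    fun B hB hBX => hB.image_of_measurable_injOn hfmeas (hinj.mono hBX)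
  -- Jacobian change of variables on atom interiors
  have hJ : ∀ (i : Fin r) (B : Set (Euc d)), MeasurableSet B → B ⊆ interior (ω i) →
      volume (f '' B) = volume B := by
    intro i B hB hBi
    have hf' : ∀ x ∈ B, HasFDerivWithinAt f (fderiv ℝ f x) B x := by
      intro x hx
      have hdiff : DifferentiableAt ℝ f x :=
        (((hC1 i).differentiableOn one_ne_zero).differentiableAt
          (isOpen_interior.mem_nhds (hBi hx)))
      exact hdiff.hasFDerivAt.hasFDerivWithinAt
    have hinjB : InjOn f B := hinj.mono (hBi.trans ((interior_subset).trans (hsubX i)))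
    rw [← lintegral_abs_det_fderiv_eq_addHaar_image volume hB hf' hinjB]
    calc (∫⁻ x in B, ENNReal.ofReal |(fderiv ℝ f x).det| ∂volume)
        = ∫⁻ _ in B, 1 ∂volume := by
          apply setLIntegral_congr_fun hB
          intro x hx; beta_reduce
          rw [hdet i x (hBi hx)]; simp
      _ = volume B := by simp
  -- the union of atom interiors covers X up to null sets
  set Y : Set (Euc d) := ⋃ i, interior (ω i) with hY
  have hYo : IsOpen Y := isOpen_iUnion fun i => isOpen_interior
  have hXYnull : volume (X \ Y) = 0 := by
    have hsub : X \ Y ⊆ ⋃ i, frontier (ω i) := by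
      rintro x ⟨hxX, hxY⟩
      rw [← hcover] at hxX
      obtain ⟨i, hi⟩ := mem_iUnion.mp hxX
      have : x ∉ interior (ω i) := fun h => hxY (mem_iUnion.mpr ⟨i, h⟩)
      exact mem_iUnion.mpr ⟨i, subset_closure hi, this⟩
    exact measure_mono_null hsub (by
      refine measure_iUnion_null fun i => hfr i)
  -- m preserves volume of images of measurable subsets of X
  have himg : ∀ B : Set (Euc d), MeasurableSet B → B ⊆ X → m (f '' B) = m B := by
    intro B hB hBX
    have hB0 : volume (B \ Y) = 0 := measure_mono_null (diff_subset_diff_left hBX) hXYnull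
    have hmB0 : m (B \ Y) = 0 := (hmvol _ ((diff_subset).trans hBX)).mpr hB0
    have hmfB0 : m (f '' (B \ Y)) = 0 := (hnonsing _ (hB.diff hYo.measurableSet) hmB0).2
    have hBsplit : B = (⋃ i, B ∩ interior (ω i)) ∪ (B \ Y) := by
      ext x; constructor
      · intro hx
        by_cases hxY : x ∈ Y
        · obtain ⟨i, hi⟩ := mem_iUnion.mp hxY
          exact Or.inl (mem_iUnion.mpr ⟨i, hx, hi⟩)
        · exact Or.inr ⟨hx, hxY⟩
      · rintro (hx | hx)
        · obtain ⟨i, hi, _⟩ := mem_iUnion.mp hx; exact hi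
        · exact hx.1
    have hsmeas : ∀ i, MeasurableSet (B ∩ interior (ω i)) :=
      fun i => hB.inter isOpen_interior.measurableSet
    have hssubX : ∀ i, B ∩ interior (ω i) ⊆ X :=
      fun i => (inter_subset_left).trans hBX
    have hsdisj : Pairwise (Disjoint on fun i => B ∩ interior (ω i)) := by
      intro i j hij
      exact (((hdisj hij).mono interior_subset interior_subset).mono
        inter_subset_right inter_subset_right)
    have hfdisj : Pairwise (Disjoint on fun i => f '' (B ∩ interior (ω i))) := by
      intro i j hij
      rw [Function.onFun, Set.disjoint_left]
      rintro y ⟨a, ha, rfl⟩ ⟨b, hb, hab⟩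
      have hba : b = a := hinj (hssubX j hb) (hssubX i ha) hab
      exact Set.disjoint_left.mp (hsdisj hij) ha (hba ▸ hb)
    have hfmeas' : ∀ i, MeasurableSet (f '' (B ∩ interior (ω i))) :=
      fun i => himg_meas _ (hsmeas i) (hssubX i)
    have heachvol : ∀ i, m (f '' (B ∩ interior (ω i))) = m (B ∩ interior (ω i)) := by
      intro i
      have h1 : volume (f '' (B ∩ interior (ω i))) = volume (B ∩ interior (ω i)) :=
        hJ i _ (hsmeas i) inter_subset_right
      rw [hmval, hmval,
        inter_eq_self_of_subset_left
          (image_subset_iff.mpr (fun a ha => hmaps (hssubX i ha))),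
        inter_eq_self_of_subset_left (hssubX i), h1]
    calc m (f '' B) = m ((⋃ i, f '' (B ∩ interior (ω i))) ∪ f '' (B \ Y)) := by
          rw [← image_iUnion, ← image_union, ← hBsplit]
      _ = m (⋃ i, f '' (B ∩ interior (ω i))) := meas_union_null' hmfB0
      _ = ∑' i, m (f '' (B ∩ interior (ω i))) := measure_iUnion hfdisj hfmeas'
      _ = ∑' i, m (B ∩ interior (ω i)) := by simp_rw [heachvol]
      _ = m (⋃ i, B ∩ interior (ω i)) := (measure_iUnion hsdisj hsmeas).symm
      _ = m B := by
          conv_rhs => rw [hBsplit]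
          rw [meas_union_null' hmB0]
  -- preimage invariance of m
  have hpre : ∀ A : Set (Euc d), MeasurableSet A → m (f ⁻¹' A) = m A := by
    intro A hA
    have h1 : m (f ⁻¹' A) = m (f ⁻¹' A ∩ X) := (measure_inter_conull hmXc).symm
    have h2 : f '' (f ⁻¹' A ∩ X) = A ∩ X := by
      ext y; constructor
      · rintro ⟨x, ⟨hxA, hxX⟩, rfl⟩
        exact ⟨hxA, hmaps hxX⟩
      · rintro ⟨hyA, hyX⟩
        obtain ⟨x, hxX, rfl⟩ := hbij.surjOn hyX
        exact ⟨x, ⟨hyA, hxX⟩, rfl⟩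
    rw [h1, ← himg _ ((hfmeas hA).inter hXm) inter_subset_right, h2,
      measure_inter_conull hmXc]
  -- pushforward of restricted m under f
  have hmap : ∀ A : Set (Euc d), MeasurableSet A → A ⊆ X →
      (m.restrict A).map f = m.restrict (f '' A) := by
    intro A hA hAX
    ext C hC
    rw [Measure.map_apply hfmeas hC, Measure.restrict_apply hC,
      Measure.restrict_apply (hfmeas hC)]
    have h2 : C ∩ f '' A = f '' (f ⁻¹' C ∩ A) := by
      ext y; constructor
      · rintro ⟨hyC, a, haA, rfl⟩
        exact ⟨a, ⟨hyC, haA⟩, rfl⟩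
      · rintro ⟨a, ⟨haC, haA⟩, rfl⟩
        exact ⟨haC, a, haA, rfl⟩
    rw [h2, himg _ ((hfmeas hC).inter hA) (inter_subset_right.trans hAX)]
  -- change of variables for lintegrals
  have hcov : ∀ (A : Set (Euc d)) (g : Euc d → ℝ≥0∞), MeasurableSet A → A ⊆ X →
      Measurable g → ∫⁻ y in f '' A, g y ∂m = ∫⁻ x in A, g (f x) ∂m := by
    intro A g hA hAX hg
    rw [← hmap A hA hAX, lintegral_map hg hfmeas]
  -- the density
  set η : Euc d → ℝ≥0∞ := μ.rnDeriv m with hη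
  have hηmeas : Measurable η := μ.measurable_rnDeriv m
  have hwd : m.withDensity η = μ := (haveI : SigmaFinite m := inferInstance
    haveI : SFinite μ := inferInstance
    Measure.withDensity_rnDeriv_eq μ m hac)
  have hμapply : ∀ A : Set (Euc d), MeasurableSet A → μ A = ∫⁻ x in A, η x ∂m := by
    intro A hA
    rw [← hwd, withDensity_apply _ hA]
  have hμXc : μ Xᶜ = 0 := hac hmXc
  -- key integral identity
  have hkey : ∀ A : Set (Euc d), MeasurableSet A → A ⊆ X →
      ∫⁻ x in A, η (f x) ∂m = ∫⁻ x in A, η x ∂m := by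
    intro A hA hAX
    have hfA : MeasurableSet (f '' A) := himg_meas _ hA hAX
    have h1 : f ⁻¹' (f '' A) ∩ X = A := by
      ext x; constructor
      · rintro ⟨⟨a, haA, hax⟩, hxX⟩
        rwa [← hinj (hAX haA) hxX hax]
      · intro hx
        exact ⟨mem_image_of_mem f hx, hAX hx⟩
    have h2 : μ (f '' A) = μ A := by
      rw [← hinv _ hfA, ← measure_inter_conull (μ := μ) hμXc, h1]
    calc ∫⁻ x in A, η (f x) ∂m = ∫⁻ y in f '' A, η y ∂m := (hcov A η hA hAX hηmeas).symm
      _ = μ (f '' A) := (hμapply _ hfA).symm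
      _ = μ A := h2
      _ = ∫⁻ x in A, η x ∂m := hμapply _ hA
  -- a.e. invariance of the density
  have hηinv : ∀ᵐ x ∂m, η (f x) = η x := by
    have haux : ∀ a b : ℝ≥0∞, a < b →
        ∀ A : Set (Euc d), MeasurableSet A → A ⊆ X →
        (∀ x ∈ A, η (f x) ≤ a) → (∀ x ∈ A, b ≤ η x) → m A = 0 := by
      intro a b hab A hA hAX hfa hb
      by_contra hA0
      have hAfin : m A ≠ ⊤ := (measure_lt_top m A).ne
      have h1 : ∫⁻ x in A, η (f x) ∂m ≤ a * m A := by
        calc ∫⁻ x in A, η (f x) ∂m ≤ ∫⁻ _ in A, a ∂m :=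
              setLIntegral_mono (by fun_prop) (fun x hx => hfa x hx)
          _ = a * m A := by rw [setLIntegral_const]
      have h2 : b * m A ≤ ∫⁻ x in A, η x ∂m := by
        calc b * m A = ∫⁻ _ in A, b ∂m := by rw [setLIntegral_const]
          _ ≤ ∫⁻ x in A, η x ∂m := setLIntegral_mono hηmeas (fun x hx => hb x hx)
      have hle : b * m A ≤ a * m A := h2.trans ((hkey A hA hAX) ▸ h1)
      exact absurd ((ENNReal.mul_le_mul_iff_left hA0 hAfin).mp hle) (not_le.mpr hab)
    have haux' : ∀ a b : ℝ≥0∞, a < b →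
        ∀ A : Set (Euc d), MeasurableSet A → A ⊆ X →
        (∀ x ∈ A, η x ≤ a) → (∀ x ∈ A, b ≤ η (f x)) → m A = 0 := by
      intro a b hab A hA hAX hfa hb
      by_contra hA0
      have hAfin : m A ≠ ⊤ := (measure_lt_top m A).ne
      have h1 : ∫⁻ x in A, η x ∂m ≤ a * m A := by
        calc ∫⁻ x in A, η x ∂m ≤ ∫⁻ _ in A, a ∂m :=
              setLIntegral_mono (by fun_prop) (fun x hx => hfa x hx)
          _ = a * m A := by rw [setLIntegral_const]
      have h2 : b * m A ≤ ∫⁻ x in A, η (f x) ∂m := by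
        calc b * m A = ∫⁻ _ in A, b ∂m := by rw [setLIntegral_const]
          _ ≤ ∫⁻ x in A, η (f x) ∂m :=
              setLIntegral_mono (by fun_prop) (fun x hx => hb x hx)
      have hle : b * m A ≤ a * m A := (h2.trans (hkey A hA hAX).le).trans h1
      exact absurd ((ENNReal.mul_le_mul_iff_left hA0 hAfin).mp hle) (not_le.mpr hab)
    -- the two one-sided bad sets are null
    have hlt1 : m {x | x ∈ X ∧ η (f x) < η x} = 0 := by
      have hsub : {x | x ∈ X ∧ η (f x) < η x} ⊆
          ⋃ (q : ℚ) (q' : ℚ),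
            {x | ((Real.toNNReal q : ℝ≥0∞) < (Real.toNNReal q' : ℝ≥0∞)) ∧ x ∈ X ∧
              η (f x) ≤ (Real.toNNReal q : ℝ≥0∞) ∧
              (Real.toNNReal q' : ℝ≥0∞) ≤ η x} := by
        rintro x ⟨hxX, hxlt⟩
        obtain ⟨q, _, hq1, hq2⟩ := ENNReal.lt_iff_exists_rat_btwn.mp hxlt
        obtain ⟨q', _, hq'1, hq'2⟩ := ENNReal.lt_iff_exists_rat_btwn.mp hq2
        exact mem_iUnion.mpr ⟨q, mem_iUnion.mpr
          ⟨q', by exact_mod_cast hq'1, hxX, hq1.le, hq'2.le⟩⟩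
      refine measure_mono_null hsub (measure_iUnion_null fun q =>
        measure_iUnion_null fun q' => ?_)
      by_cases hqq : (Real.toNNReal q : ℝ≥0∞) < (Real.toNNReal q' : ℝ≥0∞)
      · have hset : {x | ((Real.toNNReal q : ℝ≥0∞) < (Real.toNNReal q' : ℝ≥0∞)) ∧ x ∈ X ∧
            η (f x) ≤ (Real.toNNReal q : ℝ≥0∞) ∧ (Real.toNNReal q' : ℝ≥0∞) ≤ η x} =
            X ∩ ({x | η (f x) ≤ (Real.toNNReal q : ℝ≥0∞)} ∩
              {x | (Real.toNNReal q' : ℝ≥0∞) ≤ η x}) := by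
          ext x; simp only [mem_setOf_eq, mem_inter_iff]; tauto
        rw [hset]
        refine haux _ _ hqq _ ?_ inter_subset_left
          (fun x hx => hx.2.1) (fun x hx => hx.2.2)
        exact hXm.inter ((measurableSet_le (hηmeas.comp hfmeas) measurable_const).inter
          (measurableSet_le measurable_const hηmeas))
      · have hset : {x | ((Real.toNNReal q : ℝ≥0∞) < (Real.toNNReal q' : ℝ≥0∞)) ∧ x ∈ X ∧
            η (f x) ≤ (Real.toNNReal q : ℝ≥0∞) ∧ (Real.toNNReal q' : ℝ≥0∞) ≤ η x} = ∅ := by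
          ext x; simp only [mem_setOf_eq, mem_empty_iff_false, iff_false]
          tauto
        rw [hset]; simp
    have hlt2 : m {x | x ∈ X ∧ η x < η (f x)} = 0 := by
      have hsub : {x | x ∈ X ∧ η x < η (f x)} ⊆
          ⋃ (q : ℚ) (q' : ℚ),
            {x | ((Real.toNNReal q : ℝ≥0∞) < (Real.toNNReal q' : ℝ≥0∞)) ∧ x ∈ X ∧
              η x ≤ (Real.toNNReal q : ℝ≥0∞) ∧
              (Real.toNNReal q' : ℝ≥0∞) ≤ η (f x)} := by
        rintro x ⟨hxX, hxlt⟩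
        obtain ⟨q, _, hq1, hq2⟩ := ENNReal.lt_iff_exists_rat_btwn.mp hxlt
        obtain ⟨q', _, hq'1, hq'2⟩ := ENNReal.lt_iff_exists_rat_btwn.mp hq2
        exact mem_iUnion.mpr ⟨q, mem_iUnion.mpr
          ⟨q', by exact_mod_cast hq'1, hxX, hq1.le, hq'2.le⟩⟩
      refine measure_mono_null hsub (measure_iUnion_null fun q =>
        measure_iUnion_null fun q' => ?_)
      by_cases hqq : (Real.toNNReal q : ℝ≥0∞) < (Real.toNNReal q' : ℝ≥0∞)
      · have hset : {x | ((Real.toNNReal q : ℝ≥0∞) < (Real.toNNReal q' : ℝ≥0∞)) ∧ x ∈ X ∧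
            η x ≤ (Real.toNNReal q : ℝ≥0∞) ∧ (Real.toNNReal q' : ℝ≥0∞) ≤ η (f x)} =
            X ∩ ({x | η x ≤ (Real.toNNReal q : ℝ≥0∞)} ∩
              {x | (Real.toNNReal q' : ℝ≥0∞) ≤ η (f x)}) := by
          ext x; simp only [mem_setOf_eq, mem_inter_iff]; tauto
        rw [hset]
        refine haux' _ _ hqq _ ?_ inter_subset_left
          (fun x hx => hx.2.1) (fun x hx => hx.2.2)
        exact hXm.inter ((measurableSet_le hηmeas measurable_const).inter
          (measurableSet_le measurable_const (hηmeas.comp hfmeas)))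
      · have hset : {x | ((Real.toNNReal q : ℝ≥0∞) < (Real.toNNReal q' : ℝ≥0∞)) ∧ x ∈ X ∧
            η x ≤ (Real.toNNReal q : ℝ≥0∞) ∧ (Real.toNNReal q' : ℝ≥0∞) ≤ η (f x)} = ∅ := by
          ext x; simp only [mem_setOf_eq, mem_empty_iff_false, iff_false]
          tauto
        rw [hset]; simp
    rw [ae_iff]
    refine measure_mono_null (fun x hx => ?_)
      (measure_union_null (measure_union_null hmXc hlt1) hlt2 :
        m (Xᶜ ∪ {x | x ∈ X ∧ η (f x) < η x} ∪ {x | x ∈ X ∧ η x < η (f x)}) = 0)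
    simp only [mem_setOf_eq] at hx
    by_cases hxX : x ∈ X
    · rcases lt_or_gt_of_ne hx with h | h
      · exact Or.inl (Or.inr ⟨hxX, h⟩)
      · exact Or.inr ⟨hxX, h⟩
    · exact Or.inl (Or.inl hxX)
  -- assemble the bad null set N
  obtain ⟨N₁, hN₁s, hN₁m, hN₁0⟩ := exists_measurable_superset_of_null (ae_iff.mp hrep)
  obtain ⟨N₂, hN₂s, hN₂m, hN₂0⟩ := exists_measurable_superset_of_null (ae_iff.mp hcont)
  obtain ⟨N₃, hN₃s, hN₃m, hN₃0⟩ := exists_measurable_superset_of_null (ae_iff.mp hηinv)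
  set N : Set (Euc d) := N₁ ∪ N₂ ∪ N₃ ∪ f ⁻¹' N₁ with hNdef
  have hNm : MeasurableSet N := ((hN₁m.union hN₂m).union hN₃m).union (hfmeas hN₁m)
  have hN0 : m N = 0 := by
    refine measure_union_null (measure_union_null (measure_union_null hN₁0 hN₂0) hN₃0) ?_
    rw [hpre N₁ hN₁m]; exact hN₁0
  have hφηpt : ∀ x, x ∉ N₁ → φ x = (η x).toReal :=
    fun x hx => by_contra fun h => hx (hN₁s h)
  have hstep : ∀ z, z ∈ X → z ∉ N → φ (f z) = φ z := by
    intro z _ hzN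
    have h1 : z ∉ N₁ := fun h => hzN (by rw [hNdef]; exact Or.inl (Or.inl (Or.inl h)))
    have h2 : f z ∉ N₁ := fun h => hzN (by rw [hNdef]; exact Or.inr h)
    have h3 : z ∉ N₃ := fun h => hzN (by rw [hNdef]; exact Or.inl (Or.inr h))
    have hη3 : η (f z) = η z := by_contra fun h => h3 (hN₃s h)
    rw [hφηpt _ h2, hη3, ← hφηpt z h1]
  have hφcont : ∀ z, z ∉ N → ContinuousWithinAt φ X z := by
    intro z hzN
    by_contra h
    exact hzN (by rw [hNdef]; exact Or.inl (Or.inl (Or.inr (hN₂s h))))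
  -- iterated images and preimages of N are null
  have himgiter : ∀ p : ℕ, MeasurableSet (f^[p] '' (N ∩ X)) ∧
      f^[p] '' (N ∩ X) ⊆ X ∧ m (f^[p] '' (N ∩ X)) = 0 := by
    intro p
    induction p with
    | zero =>
      simp only [Function.iterate_zero, image_id]
      exact ⟨hNm.inter hXm, inter_subset_right,
        measure_mono_null inter_subset_left hN0⟩
    | succ p ih =>
      rw [Function.iterate_succ', Set.image_comp]
      refine ⟨himg_meas _ ih.1 ih.2.1, ?_, (hnonsing _ ih.1 ih.2.2).2⟩
      exact image_subset_iff.mpr fun a ha => hmaps (ih.2.1 ha)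
  have hpreiter : ∀ (q : ℕ) (S : Set (Euc d)), MeasurableSet S → m S = 0 →
      m (f^[q] ⁻¹' S) = 0 := by
    intro q
    induction q with
    | zero => intro S _ hS0; simpa using hS0
    | succ q ih =>
      intro S hSm hS0
      rw [Function.iterate_succ, Set.preimage_comp]
      rw [hpre _ ((hfmeas.iterate q) hSm)]
      exact ih S hSm hS0
  set B : Set (Euc d) := ⋃ (p : ℕ) (q : ℕ), f^[q] ⁻¹' (f^[p] '' (N ∩ X)) with hBdef
  have hB0 : m B = 0 :=
    measure_iUnion_null fun p => measure_iUnion_null fun q =>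
      hpreiter q _ (himgiter p).1 (himgiter p).2.2
  -- pick a nomadic point avoiding B
  have hpos : 0 < m ({x | Nomadic X f x} \ B) := by
    rwa [measure_diff_null hB0]
  obtain ⟨x₀, hx₀nom, hx₀B⟩ := nonempty_of_measure_ne_zero hpos.ne'
  have hx₀X : x₀ ∈ X := hx₀nom.1
  -- the orbit of x₀ avoids N
  have hgoodorbit : ∀ (p q : ℕ) (y : Euc d), y ∈ X → f^[p] y = f^[q] x₀ →
      ∀ j, j ≤ p → f^[j] y ∉ N := by
    intro p q y hyX hpq j hj hmem
    apply hx₀B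
    refine mem_iUnion.mpr ⟨p - j, mem_iUnion.mpr ⟨q, ?_⟩⟩
    refine ⟨f^[j] y, ⟨hmem, hmaps.iterate j hyX⟩, ?_⟩
    rw [← Function.iterate_add_apply, Nat.sub_add_cancel hj, hpq]
  have hx₀N : x₀ ∉ N := by
    have := hgoodorbit 0 0 x₀ hx₀X rfl 0 le_rfl
    simpa using this
  -- φ is constant along iterates avoiding N
  have hiter : ∀ (p : ℕ) (y : Euc d), y ∈ X → (∀ j, j ≤ p → f^[j] y ∉ N) →
      φ (f^[p] y) = φ y := by
    intro p
    induction p with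
    | zero => intro y _ _; simp
    | succ p ih =>
      intro y hy hj
      rw [Function.iterate_succ_apply',
        hstep _ (hmaps.iterate p hy) (hj p (Nat.le_succ p))]
      exact ih y hy fun j hjp => hj j (hjp.trans (Nat.le_succ p))
  have horb : ∀ y ∈ fullOrbit X f x₀, φ y = φ x₀ := by
    rintro y ⟨hyX, p, q, hpq⟩
    have h1 : φ (f^[p] y) = φ y := hiter p y hyX (hgoodorbit p q y hyX hpq)
    have h2 : φ (f^[q] x₀) = φ x₀ := hiter q x₀ hx₀X (hgoodorbit q q x₀ hx₀X rfl)
    rw [← h1, hpq, h2]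
  -- φ is constant on X \ N
  have hconst : ∀ z, z ∈ X → z ∉ N → φ z = φ x₀ := by
    intro z hzX hzN
    have hcl : z ∈ closure (fullOrbit X f x₀) := hx₀nom.2 hzX
    haveI hne : (𝓝[fullOrbit X f x₀] z).NeBot :=
      mem_closure_iff_nhdsWithin_neBot.mp hcl
    have hT1 : Tendsto φ (𝓝[fullOrbit X f x₀] z) (𝓝 (φ z)) :=
      (hφcont z hzN).mono_left (nhdsWithin_mono z fun y hy => hy.1)
    have hT2 : Tendsto φ (𝓝[fullOrbit X f x₀] z) (𝓝 (φ x₀)) := by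
      refine Tendsto.congr' ?_ tendsto_const_nhds
      filter_upwards [self_mem_nhdsWithin] with y hy
      exact (horb y hy).symm
    exact tendsto_nhds_unique hT1 hT2
  -- conclude
  have hφae : ∀ᵐ x ∂m, φ x = φ x₀ := by
    rw [ae_iff]
    refine measure_mono_null (fun x hx => ?_)
      (measure_union_null hmXc hN0 : m (Xᶜ ∪ N) = 0)
    simp only [mem_setOf_eq] at hx
    by_cases hxX : x ∈ X
    · by_cases hxN : x ∈ N
      · exact Or.inr hxN
      · exact absurd (hconst x hxX hxN) hx
    · exact Or.inl hxX
  have hηae : η =ᵐ[m] fun _ => ENNReal.ofReal (φ x₀) := by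
    filter_upwards [hφae, hrep, Measure.rnDeriv_lt_top μ m] with x h1 h2 h3
    have h3' : η x ≠ ⊤ := by rw [hη]; exact h3.ne
    rw [← ENNReal.ofReal_toReal h3', ← h2, h1]
  have hμ' : μ = (ENNReal.ofReal (φ x₀)) • m := by
    rw [← hwd, withDensity_congr_ae hηae, withDensity_const]
  have h1 : ENNReal.ofReal (φ x₀) = 1 := by
    have h2 := hμp.measure_univ
    rw [hμ', Measure.smul_apply, hmuniv, smul_eq_mul, mul_one] at h2
    exact h2
  rw [hμ', h1, one_smul]
end
end

section
/- Let T : [0,1) → [0,1) be a topologically transitive interval exchange transformation and let m be Lebesgue measure on [0,1). If μ is an absolutely continuous T-invariant probability measure with μ ≠ m, then the density dμ/dm is m-almost everywhere equal to a simple function, i.e., a finite linear combination of characteristic functions of measurable sets. -/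
open MeasureTheory Set Function Metric Filter Topology
open scoped ENNReal

noncomputable section

namespace IET7

/-- cumulative function of a set -/
def cdf (C : Set ℝ) (x : ℝ) : ℝ := (volume (C ∩ Set.Ico 0 x)).toReal

lemma vol_ne_top (C : Set ℝ) {a b : ℝ} : volume (C ∩ Set.Ico a b) ≠ ⊤ := by
  refine ne_top_of_le_ne_top ?_ (measure_mono inter_subset_right)
  simp [Real.volume_Ico]

lemma cdf_nonneg (C : Set ℝ) (x : ℝ) : 0 ≤ cdf C x := ENNReal.toReal_nonneg

lemma cdf_of_nonpos {C : Set ℝ} {x : ℝ} (hx : x ≤ 0) : cdf C x = 0 := by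
  have : Set.Ico (0:ℝ) x = ∅ := Set.Ico_eq_empty (not_lt.2 hx)
  simp [cdf, this]

lemma cdf_add {C : Set ℝ} (hC : MeasurableSet C) {a b : ℝ} (h0 : 0 ≤ a) (hab : a ≤ b) :
    cdf C b = cdf C a + (volume (C ∩ Set.Ico a b)).toReal := by
  have hsplit : C ∩ Set.Ico 0 b = (C ∩ Set.Ico 0 a) ∪ (C ∩ Set.Ico a b) := by
    rw [← Set.inter_union_distrib_left, Set.Ico_union_Ico_eq_Ico h0 hab]
  have hdisj : Disjoint (C ∩ Set.Ico 0 a) (C ∩ Set.Ico a b) := by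
    refine Set.disjoint_left.2 fun x hx hx' => ?_
    exact absurd (hx'.2.1.trans_lt hx.2.2) (lt_irrefl _)
  rw [cdf, cdf, hsplit, measure_union hdisj (hC.inter measurableSet_Ico),
    ENNReal.toReal_add (vol_ne_top C) (vol_ne_top C)]

lemma cdf_mono {C : Set ℝ} : Monotone (cdf C) := by
  intro a b hab
  exact ENNReal.toReal_mono (vol_ne_top C) (measure_mono (Set.inter_subset_inter_right _
    (Set.Ico_subset_Ico le_rfl hab)))

lemma vol_toReal_le {C : Set ℝ} {a b : ℝ} (hab : a ≤ b) :
    (volume (C ∩ Set.Ico a b)).toReal ≤ b - a := by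
  have h1 : volume (C ∩ Set.Ico a b) ≤ ENNReal.ofReal (b - a) := by
    refine le_trans (measure_mono inter_subset_right) ?_
    rw [Real.volume_Ico]
  refine le_trans (ENNReal.toReal_mono (by simp) h1) ?_
  rw [ENNReal.toReal_ofReal (by linarith)]

lemma cdf_lipschitz {C : Set ℝ} (hC : MeasurableSet C) : LipschitzWith 1 (cdf C) := by
  refine LipschitzWith.of_dist_le_mul fun x y => ?_
  simp only [NNReal.coe_one, one_mul, Real.dist_eq]
  wlog hxy : y ≤ x generalizing x y
  · rw [abs_sub_comm, abs_sub_comm x y]; exact this y x (le_of_not_ge hxy)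
  rw [abs_of_nonneg (sub_nonneg.2 (cdf_mono hxy)), abs_of_nonneg (sub_nonneg.2 hxy)]
  rcases le_or_gt x 0 with hx | hx
  · rw [cdf_of_nonpos hx, cdf_of_nonpos (hxy.trans hx)]; linarith
  rcases le_or_gt y 0 with hy | hy
  · rw [cdf_of_nonpos hy]
    have : cdf C x = cdf C 0 + (volume (C ∩ Set.Ico 0 x)).toReal := cdf_add hC le_rfl hx.le
    rw [cdf_of_nonpos le_rfl] at this
    rw [this, zero_add, sub_zero]
    refine le_trans (vol_toReal_le hx.le) (by linarith)
  · have := cdf_add hC hy.le hxy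
    rw [this]
    have := vol_toReal_le (C := C) hxy
    linarith

lemma cdf_continuous {C : Set ℝ} (hC : MeasurableSet C) : Continuous (cdf C) :=
  (cdf_lipschitz hC).continuous



/-- translation relation for the cdf of an almost-invariant set -/
lemma cdf_translate {T : ℝ → ℝ} {C : Set ℝ} (hC : MeasurableSet C)
    (hae : (T ⁻¹' C ∩ Set.Ico (0:ℝ) 1 : Set ℝ) =ᵐ[volume] C)
    {a b c : ℝ} (h0a : 0 ≤ a) (hab : a ≤ b) (h0c : 0 ≤ a + c)
    (hsub : Set.Ico a b ⊆ Set.Ico (0:ℝ) 1)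
    (hT : ∀ u ∈ Set.Ico a b, T u = u + c) :
    cdf C b - cdf C a = cdf C (b + c) - cdf C (a + c) := by
  have e1 : cdf C b = cdf C a + (volume (C ∩ Set.Ico a b)).toReal := cdf_add hC h0a hab
  have e2 : cdf C (b + c) = cdf C (a + c) + (volume (C ∩ Set.Ico (a + c) (b + c))).toReal :=
    cdf_add hC h0c (by linarith)
  have key : volume (C ∩ Set.Ico (a + c) (b + c)) = volume (C ∩ Set.Ico a b) := by
    have h1 : volume ((fun u => u + c) ⁻¹' (C ∩ Set.Ico (a + c) (b + c)))
        = volume (C ∩ Set.Ico (a + c) (b + c)) :=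
      measure_preimage_add_right volume c _
    rw [← h1]
    have h2 : (fun u => u + c) ⁻¹' (C ∩ Set.Ico (a + c) (b + c))
        = ((fun u => u + c) ⁻¹' C) ∩ Set.Ico a b := by
      ext u
      simp only [Set.mem_preimage, Set.mem_inter_iff, Set.mem_Ico]
      constructor
      · rintro ⟨h3, h4, h5⟩; exact ⟨h3, by linarith, by linarith⟩
      · rintro ⟨h3, h4, h5⟩; exact ⟨h3, by linarith, by linarith⟩
    rw [h2]
    have h3 : ((fun u => u + c) ⁻¹' C) ∩ Set.Ico a b
        = (T ⁻¹' C ∩ Set.Ico (0:ℝ) 1) ∩ Set.Ico a b := by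
      ext u
      simp only [Set.mem_inter_iff, Set.mem_preimage]
      constructor
      · rintro ⟨h4, h5⟩; exact ⟨⟨by rwa [hT u h5], hsub h5⟩, h5⟩
      · rintro ⟨⟨h4, _⟩, h5⟩; rw [hT u h5] at h4; exact ⟨h4, h5⟩
    rw [h3]
    refine measure_congr ?_
    filter_upwards [hae] with x hx
    have hx' : x ∈ T ⁻¹' C ∩ Set.Ico (0:ℝ) 1 ↔ x ∈ C := iff_of_eq hx
    rw [eq_iff_iff]
    constructor
    · rintro ⟨h4, h5⟩; exact ⟨hx'.1 h4, h5⟩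
    · rintro ⟨h4, h5⟩; exact ⟨hx'.2 h4, h5⟩
  have e3 : (volume (C ∩ Set.Ico (a + c) (b + c))).toReal
      = (volume (C ∩ Set.Ico a b)).toReal := by rw [key]
  linarith

/-- a continuous function invariant under a transitive map of `[0,1)` is constant there -/
lemma eq_on_of_invariant (T : ℝ → ℝ)
    (htrans : ∀ U V : Set ℝ, RelOpen (Set.Ico (0:ℝ) 1) U → U.Nonempty →
      RelOpen (Set.Ico (0:ℝ) 1) V → V.Nonempty →
      ∃ n : ℤ, (iterImage (Set.Ico (0:ℝ) 1) T n U ∩ V).Nonempty)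
    (hmaps : Set.MapsTo T (Set.Ico (0:ℝ) 1) (Set.Ico (0:ℝ) 1))
    (D : ℝ → ℝ) (hD : Continuous D)
    (hinv : ∀ x ∈ Set.Ico (0:ℝ) 1, D (T x) = D x) :
    ∀ x ∈ Set.Ico (0:ℝ) 1, ∀ y ∈ Set.Ico (0:ℝ) 1, D x = D y := by
  have hiter : ∀ (k : ℕ), ∀ x ∈ Set.Ico (0:ℝ) 1, D (T^[k] x) = D x := by
    intro k
    induction k with
    | zero => intro x _; simp
    | succ n ih =>
      intro x hx
      rw [Function.iterate_succ_apply', hinv _ (hmaps.iterate n hx), ih x hx]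
  have key : ∀ x ∈ Set.Ico (0:ℝ) 1, ∀ y ∈ Set.Ico (0:ℝ) 1, ¬ D x < D y := by
    intro x hx y hy hlt
    set s := (D x + D y) / 2 with hs
    set U := Set.Ico (0:ℝ) 1 ∩ D ⁻¹' (Set.Iio s) with hU
    set V := Set.Ico (0:ℝ) 1 ∩ D ⁻¹' (Set.Ioi s) with hV
    have hUopen : RelOpen (Set.Ico (0:ℝ) 1) U := ⟨_, isOpen_Iio.preimage hD, rfl⟩
    have hVopen : RelOpen (Set.Ico (0:ℝ) 1) V := ⟨_, isOpen_Ioi.preimage hD, rfl⟩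
    have hUne : U.Nonempty := ⟨x, hx, by simp only [Set.mem_preimage, Set.mem_Iio]; rw [hs]; linarith⟩
    have hVne : V.Nonempty := ⟨y, hy, by simp only [Set.mem_preimage, Set.mem_Ioi]; rw [hs]; linarith⟩
    obtain ⟨n, w, hw1, hw2⟩ := htrans U V hUopen hUne hVopen hVne
    have hwV : s < D w := hw2.2
    rcases le_or_gt 0 n with hn | hn
    · rw [iterImage, if_pos hn] at hw1
      obtain ⟨u, hu, rfl⟩ := hw1
      have : D (T^[n.toNat] u) = D u := hiter _ u hu.1
      have hu2 : D u < s := hu.2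
      rw [this] at hwV; linarith
    · rw [iterImage, if_neg (not_le.2 hn)] at hw1
      obtain ⟨hwX, hw3⟩ := hw1
      have : D (T^[(-n).toNat] w) = D w := hiter _ w hwX
      have : D w < s := by rw [← this]; exact hw3.2
      linarith
  intro x hx y hy
  by_contra h
  rcases lt_or_gt_of_ne h with h' | h'
  · exact key x hx y hy h'
  · exact key y hy x hx h'


end IET7

open IET7

/-- for a topologically transitive IET, the density of an ACIP `μ ≠ m`
is m-a.e. equal to a simple function. -/
theorem stmt7 (T : ℝ → ℝ) (hT : IsIET T)
    (m : Measure ℝ) (hm : m = volume.restrict (Set.Ico 0 1))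
    (htrans : ∀ U V : Set ℝ, RelOpen (Set.Ico (0:ℝ) 1) U → U.Nonempty →
      RelOpen (Set.Ico (0:ℝ) 1) V → V.Nonempty →
      ∃ n : ℤ, (iterImage (Set.Ico (0:ℝ) 1) T n U ∩ V).Nonempty)
    (μ : Measure ℝ) (hμp : IsProbabilityMeasure μ) (hac : μ ≪ m)
    (hinv : ∀ A : Set ℝ, MeasurableSet A → μ (T ⁻¹' A) = μ A) (hne : μ ≠ m) :
    ∃ (n : ℕ) (c : Fin n → ℝ) (A : Fin n → Set ℝ), (∀ i, MeasurableSet (A i)) ∧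
      ∀ᵐ x ∂m, (μ.rnDeriv m x).toReal =
        ∑ i, c i * (A i).indicator (fun _ => (1:ℝ)) x := by
  classical
  obtain ⟨hbij, hTmeas, r, β, γ, hβmono, hβ0, hβlast, hTpiece⟩ := hT
  have hXmeas : MeasurableSet (Set.Ico (0:ℝ) 1) := measurableSet_Ico
  -- basic measure facts
  haveI hfin : IsFiniteMeasure m := by
    constructor; rw [hm, Measure.restrict_apply_univ, Real.volume_Ico]
    exact ENNReal.ofReal_lt_top
  have hmeasM : ∀ A : Set ℝ, MeasurableSet A → m A = volume (A ∩ Set.Ico 0 1) :=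
    fun A hA => by rw [hm, Measure.restrict_apply hA]
  have hmXc : m (Set.Ico (0:ℝ) 1)ᶜ = 0 := by
    rw [hmeasM _ hXmeas.compl, Set.compl_inter_self]; exact measure_empty
  have hμXc : μ (Set.Ico (0:ℝ) 1)ᶜ = 0 := hac hmXc
  -- partition facts
  set I : Fin r → Set ℝ := fun i => Set.Ico (β i.castSucc) (β i.succ) with hI
  have hβnonneg : ∀ k : Fin (r+1), 0 ≤ β k := fun k => hβ0 ▸ hβmono.monotone (Fin.zero_le k)
  have hβle1 : ∀ k : Fin (r+1), β k ≤ 1 := fun k => hβlast ▸ hβmono.monotone (Fin.le_last k)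
  have hIsubX : ∀ i, I i ⊆ Set.Ico (0:ℝ) 1 := fun i =>
    Set.Ico_subset_Ico (hβnonneg _) (hβle1 _)
  have hIdisj : Pairwise (Disjoint on I) := by
    have key : ∀ i j : Fin r, i < j → Disjoint (I i) (I j) := by
      intro i j hij
      refine Set.disjoint_left.2 fun x hxi hxj => ?_
      have hij' : (i : ℕ) < (j : ℕ) := hij
      have h1 : β i.succ ≤ β j.castSucc := hβmono.monotone (by
        rw [Fin.le_def, Fin.val_succ, Fin.coe_castSucc]; omega)
      exact absurd ((hxi.2.trans_le h1).trans_le hxj.1) (lt_irrefl x)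
    intro i j hij
    rcases hij.lt_or_gt with h | h
    · exact key i j h
    · exact (key j i h).symm
  have hpiece_mem : ∀ x ∈ Set.Ico (0:ℝ) 1, ∃ i : Fin r, x ∈ I i := by
    intro x hx
    set Kset : Finset (Fin (r+1)) := Finset.univ.filter (fun k => β k ≤ x) with hKset
    have h0K : (0 : Fin (r+1)) ∈ Kset := by
      simp only [hKset, Finset.mem_filter, Finset.mem_univ, true_and]
      rw [hβ0]; exact hx.1
    have hKne : Kset.Nonempty := ⟨0, h0K⟩
    set K := Kset.max' hKne with hK
    have hKx : β K ≤ x := by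
      have := Kset.max'_mem hKne
      simp only [hKset, Finset.mem_filter] at this
      exact this.2
    have hKlast : K ≠ Fin.last r := by
      intro hlast
      rw [hlast, hβlast] at hKx
      exact absurd (hKx.trans_lt hx.2) (lt_irrefl 1)
    have hKlt : (K : ℕ) < r := by
      have h1 : (K : ℕ) < r + 1 := K.isLt
      have h2 : (K : ℕ) ≠ r := fun h => hKlast (Fin.ext (by rw [h]; rfl))
      omega
    refine ⟨⟨(K : ℕ), hKlt⟩, ?_, ?_⟩
    · have hcast : (⟨(K : ℕ), hKlt⟩ : Fin r).castSucc = K := by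
        apply Fin.ext; rfl
      rw [hcast]; exact hKx
    · by_contra hcon
      push_neg at hcon
      have hsuccK : (⟨(K : ℕ), hKlt⟩ : Fin r).succ ∈ Kset := by
        simp only [hKset, Finset.mem_filter, Finset.mem_univ, true_and]
        exact hcon
      have := Kset.le_max' _ hsuccK
      rw [← hK] at this
      have h3 : ((⟨(K : ℕ), hKlt⟩ : Fin r).succ : ℕ) ≤ (K : ℕ) := this
      simp only [Fin.val_succ] at h3
      omega
  have hXunion : (⋃ i, I i) = Set.Ico (0:ℝ) 1 :=
    subset_antisymm (Set.iUnion_subset hIsubX)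
      (fun x hx => Set.mem_iUnion.2 (hpiece_mem x hx))
  -- measure preservation
  have hvol_pre : ∀ A : Set ℝ, MeasurableSet A →
      volume (T ⁻¹' A ∩ Set.Ico 0 1) = volume (A ∩ Set.Ico 0 1) := by
    intro A hA
    set J : Fin r → Set ℝ := fun i => Set.Ico (β i.castSucc + γ i) (β i.succ + γ i) with hJ
    have hJimage : ∀ i, T '' I i = J i := by
      intro i; ext y
      simp only [Set.mem_image, hJ, Set.mem_Ico]
      constructor
      · rintro ⟨u, hu, rfl⟩
        rw [hTpiece i u hu]
        exact ⟨by linarith [hu.1], by linarith [hu.2]⟩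
      · intro hy
        have hmem : y - γ i ∈ I i := ⟨by linarith [hy.1], by linarith [hy.2]⟩
        refine ⟨y - γ i, hmem, ?_⟩
        rw [hTpiece i _ hmem]; ring
    have hJdisj : Pairwise (Disjoint on J) := by
      intro i j hij
      have h1 := hIdisj hij
      have h2 : Disjoint (T '' I i) (T '' I j) :=
        Disjoint.image h1 hbij.injOn (hIsubX i) (hIsubX j)
      rw [hJimage, hJimage] at h2
      exact h2
    have hJunion : (⋃ i, J i) = Set.Ico (0:ℝ) 1 := by
      have : (⋃ i, J i) = T '' (⋃ i, I i) := by
        rw [Set.image_iUnion]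
        exact (Set.iUnion_congr hJimage).symm
      rw [this, hXunion, hbij.image_eq]
    have hterm : ∀ i, volume (T ⁻¹' A ∩ I i) = volume (A ∩ J i) := by
      intro i
      have heq : T ⁻¹' A ∩ I i = (fun u => u + γ i) ⁻¹' (A ∩ J i) := by
        ext u
        simp only [Set.mem_inter_iff, Set.mem_preimage, hJ, Set.mem_Ico]
        constructor
        · rintro ⟨h1, h2⟩
          rw [hTpiece i u h2] at h1
          exact ⟨h1, by linarith [h2.1], by linarith [h2.2]⟩
        · rintro ⟨h1, h2, h3⟩
          have hu : u ∈ I i := ⟨by linarith, by linarith⟩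
          rw [hTpiece i u hu] at *
          exact ⟨h1, hu⟩
      rw [heq, measure_preimage_add_right]
    have hLHS : volume (T ⁻¹' A ∩ Set.Ico 0 1) = ∑' i, volume (T ⁻¹' A ∩ I i) := by
      rw [← hXunion, Set.inter_iUnion]
      exact measure_iUnion
        (fun i j hij => ((hIdisj hij).mono Set.inter_subset_right Set.inter_subset_right))
        (fun i => (hTmeas hA).inter measurableSet_Ico)
    have hRHS : volume (A ∩ Set.Ico 0 1) = ∑' i, volume (A ∩ J i) := by
      rw [← hJunion, Set.inter_iUnion]
      exact measure_iUnion
        (fun i j hij => ((hJdisj hij).mono Set.inter_subset_right Set.inter_subset_right))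
        (fun i => hA.inter measurableSet_Ico)
    rw [hLHS, hRHS]
    exact tsum_congr hterm
  have hmp : MeasurePreserving T m m := by
    refine ⟨hTmeas, ?_⟩
    refine Measure.ext fun A hA => ?_
    rw [Measure.map_apply hTmeas hA, hmeasM _ (hTmeas hA), hmeasM _ hA, hvol_pre A hA]
  -- density invariance
  set g : ℝ → ℝ≥0∞ := μ.rnDeriv m with hgdef
  have hgmeas : Measurable g := Measure.measurable_rnDeriv μ m
  have hwd : m.withDensity g = μ := Measure.withDensity_rnDeriv_eq μ m hac
  have himg : ∀ A : Set ℝ, MeasurableSet A → A ⊆ Set.Ico 0 1 →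
      MeasurableSet (T '' A) ∧ T '' A ⊆ Set.Ico 0 1 := by
    intro A hA hAX
    have hrep : T '' A = ⋃ i, (fun y => y - γ i) ⁻¹' (A ∩ I i) := by
      have hA' : A = ⋃ i, A ∩ I i := by
        rw [← Set.inter_iUnion, hXunion]
        exact (Set.inter_eq_left.2 hAX).symm
      conv_lhs => rw [hA']
      rw [Set.image_iUnion]
      refine Set.iUnion_congr fun i => ?_
      ext y
      simp only [Set.mem_image, Set.mem_preimage, Set.mem_inter_iff]
      constructor
      · rintro ⟨u, ⟨huA, huI⟩, rfl⟩
        rw [hTpiece i u huI]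
        simpa using And.intro huA huI
      · rintro ⟨h1, h2⟩
        exact ⟨y - γ i, ⟨h1, h2⟩, by rw [hTpiece i _ h2]; ring⟩
    constructor
    · rw [hrep]
      exact MeasurableSet.iUnion fun i =>
        (hA.inter measurableSet_Ico).preimage (measurable_id.sub_const (γ i))
    · rintro y ⟨u, hu, rfl⟩
      exact hbij.mapsTo (hAX hu)
  have hginv : (fun x => g (T x)) =ᵐ[m] g := by
    have hfinint : ∫⁻ x, g (T x) ∂m ≠ ⊤ := by
      have h1 : ∫⁻ x, g (T x) ∂m = ∫⁻ x, g x ∂m := hmp.lintegral_comp hgmeas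
      have h2 : ∫⁻ x, g x ∂m = μ Set.univ := by
        rw [← hwd, ← setLIntegral_univ, ← withDensity_apply _ MeasurableSet.univ]
      rw [h1, h2, measure_univ]
      exact ENNReal.one_ne_top
    have key : m.withDensity (fun x => g (T x)) = m.withDensity g := by
      rw [hwd]
      refine Measure.ext fun A hA => ?_
      rw [withDensity_apply _ hA]
      have hAX : MeasurableSet (A ∩ Set.Ico (0:ℝ) 1) := hA.inter hXmeas
      obtain ⟨hSmeas, hSsub⟩ := himg _ hAX Set.inter_subset_right
      set Sset := T '' (A ∩ Set.Ico (0:ℝ) 1) with hSset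
      have hpre : T ⁻¹' Sset ∩ Set.Ico (0:ℝ) 1 = A ∩ Set.Ico (0:ℝ) 1 := by
        apply subset_antisymm
        · rintro x ⟨hx1, hx2⟩
          obtain ⟨a, ha, hax⟩ := hx1
          have : a = x := hbij.injOn ha.2 hx2 hax
          rwa [← this]
        · rintro x ⟨hx1, hx2⟩
          exact ⟨⟨x, ⟨hx1, hx2⟩, rfl⟩, hx2⟩
      have hae1 : (A : Set ℝ) =ᵐ[m] (A ∩ Set.Ico (0:ℝ) 1 : Set ℝ) := by
        rw [MeasureTheory.ae_eq_set]
        constructor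
        · refine measure_mono_null (fun x hx => ?_) hmXc
          exact fun hX => hx.2 ⟨hx.1, hX⟩
        · exact measure_mono_null (fun x hx => absurd hx.1.1 (fun h => hx.2 h)) hmXc
      have hae2 : (A ∩ Set.Ico (0:ℝ) 1 : Set ℝ) =ᵐ[m] (T ⁻¹' Sset : Set ℝ) := by
        rw [MeasureTheory.ae_eq_set]
        constructor
        · refine measure_mono_null (fun x hx => ?_) hmXc
          exact absurd ⟨x, ⟨hx.1.1, hx.1.2⟩, rfl⟩ hx.2
        · refine measure_mono_null (fun x hx => ?_) hmXc
          intro hX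
          exact absurd (hpre ▸ Set.mem_inter hx.1 hX : x ∈ A ∩ Set.Ico (0:ℝ) 1).1
            (fun h => hx.2 ⟨h, hX⟩)
      have hμae2 : (T ⁻¹' Sset : Set ℝ) =ᵐ[μ] (A ∩ Set.Ico (0:ℝ) 1 : Set ℝ) := by
        rw [MeasureTheory.ae_eq_set]
        constructor
        · refine measure_mono_null (fun x hx => ?_) hμXc
          intro hX
          exact hx.2 (hpre ▸ Set.mem_inter hx.1 hX)
        · exact measure_mono_null (fun x hx => (hx.2 ⟨x, hx.1, rfl⟩).elim) hμXc
      have hμae1 : (A ∩ Set.Ico (0:ℝ) 1 : Set ℝ) =ᵐ[μ] (A : Set ℝ) := by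
        rw [MeasureTheory.ae_eq_set]
        constructor
        · exact measure_mono_null (fun x hx => absurd hx.1.1 (fun h => hx.2 h)) hμXc
        · refine measure_mono_null (fun x hx => ?_) hμXc
          exact fun hX => hx.2 ⟨hx.1, hX⟩
      calc ∫⁻ x in A, g (T x) ∂m
          = ∫⁻ x in T ⁻¹' Sset, g (T x) ∂m := setLIntegral_congr (hae1.trans hae2)
        _ = ∫⁻ x, ((T ⁻¹' Sset).indicator (fun x => g (T x))) x ∂m :=
            (lintegral_indicator (hTmeas hSmeas) _).symm
        _ = ∫⁻ x, (Sset.indicator g) (T x) ∂m := by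
            refine lintegral_congr fun x => ?_
            by_cases hx : T x ∈ Sset
            · rw [Set.indicator_of_mem hx, Set.indicator_of_mem (Set.mem_preimage.2 hx)]
            · rw [Set.indicator_of_notMem hx,
                Set.indicator_of_notMem (fun h => hx (Set.mem_preimage.1 h))]
        _ = ∫⁻ y, Sset.indicator g y ∂m := hmp.lintegral_comp (hgmeas.indicator hSmeas)
        _ = ∫⁻ y in Sset, g y ∂m := lintegral_indicator hSmeas _
        _ = μ Sset := by rw [← hwd, withDensity_apply _ hSmeas]
        _ = μ (T ⁻¹' Sset) := (hinv _ hSmeas).symm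
        _ = μ (A ∩ Set.Ico (0:ℝ) 1) := measure_congr hμae2
        _ = μ A := measure_congr hμae1
    exact (withDensity_eq_iff ((hgmeas.comp hTmeas)).aemeasurable
      hgmeas.aemeasurable hfinint).1 key
  set G : ℝ → ℝ := fun x => (g x).toReal with hGdef
  have hGmeas : Measurable G := hgmeas.ennreal_toReal
  have hGinv : ∀ᵐ x ∂m, G (T x) = G x := hginv.mono fun x hx => by
    show (g (T x)).toReal = (g x).toReal
    have hx' : g (T x) = g x := hx
    rw [hx']
  -- the set of essential values
  set S : Set ℝ := {t | ∀ ε : ℝ, 0 < ε → m (G ⁻¹' Metric.ball t ε) ≠ 0} with hSdef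
  have haeS : ∀ᵐ x ∂m, G x ∈ S := by
    rw [ae_iff]
    set W : ℚ × ℕ → Set ℝ := fun p =>
      if m (G ⁻¹' Metric.ball (p.1 : ℝ) (1/((p.2:ℝ)+1))) = 0
      then G ⁻¹' Metric.ball (p.1 : ℝ) (1/((p.2:ℝ)+1)) else ∅ with hW
    have hWnull : ∀ p, m (W p) = 0 := by
      intro p
      by_cases hp : m (G ⁻¹' Metric.ball (p.1 : ℝ) (1/((p.2:ℝ)+1))) = 0
      · rw [hW]; simpa only [if_pos hp] using hp
      · rw [hW]; simp only [if_neg hp]; exact measure_empty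
    have hcover : {x | ¬ G x ∈ S} ⊆ ⋃ p, W p := by
      intro x hx
      simp only [hSdef, Set.mem_setOf_eq, not_forall] at hx
      obtain ⟨ε, hε, h0⟩ := hx
      rw [not_not] at h0
      obtain ⟨k, hk⟩ := exists_nat_one_div_lt (by linarith : (0:ℝ) < ε/2)
      have hkpos : (0:ℝ) < 1/(2*((k:ℝ)+1)) := by positivity
      obtain ⟨q, hq⟩ := exists_rat_near (G x) hkpos
      have hklt : 1/(2*((k:ℝ)+1)) < 1/((k:ℝ)+1) := by
        rw [div_lt_div_iff₀ (by positivity) (by positivity)]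
        nlinarith [Nat.cast_nonneg (α := ℝ) k]
      have hsub : Metric.ball (q:ℝ) (1/((k:ℝ)+1)) ⊆ Metric.ball (G x) ε := by
        intro y hy
        rw [Metric.mem_ball, Real.dist_eq] at hy ⊢
        have h2 : |G x - q| < 1/(2*((k:ℝ)+1)) := hq
        have h3 : |y - G x| ≤ |y - q| + |G x - q| := by
          have : y - G x = (y - q) - (G x - q) := by ring
          rw [this]
          exact abs_sub _ _
        have h4 : (1:ℝ)/((k:ℝ)+1) < ε/2 := hk
        linarith
      have hz : m (G ⁻¹' Metric.ball (q:ℝ) (1/((k:ℝ)+1))) = 0 :=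
        measure_mono_null (Set.preimage_mono hsub) h0
      refine Set.mem_iUnion.2 ⟨(q, k), ?_⟩
      rw [hW]
      simp only [if_pos hz]
      rw [Set.mem_preimage, Metric.mem_ball, Real.dist_eq]
      linarith [hq, hklt]
    exact measure_mono_null hcover (measure_iUnion_null hWnull)
  have hSfin : S.Finite := by
    by_contra hinf
    obtain ⟨tset, htsub, htfin, htcard⟩ := Set.Infinite.exists_subset_ncard_eq hinf (r+2)
    lift tset to Finset ℝ using htfin with tf htf
    rw [Set.ncard_coe_finset] at htcard
    set l : Fin (r+2) ≃o {y // y ∈ tf} := tf.orderIsoOfFin htcard with hl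
    set t : Fin (r+2) → ℝ := fun j => (l j : ℝ) with ht
    have htinj : Function.Injective t := by
      intro a b hab
      exact l.injective (Subtype.ext hab)
    have htS : ∀ j, t j ∈ S := fun j => htsub (Finset.mem_coe.2 (l j).2)
    -- minimal gap
    set pairs := (Finset.univ ×ˢ Finset.univ : Finset (Fin (r+2) × Fin (r+2))).filter
      (fun p => p.1 ≠ p.2) with hpairs
    have hpairs_ne : pairs.Nonempty := by
      refine ⟨(⟨0, by omega⟩, ⟨1, by omega⟩), ?_⟩
      simp only [hpairs, Finset.mem_filter, Finset.mem_product, Finset.mem_univ, true_and]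
      intro h
      have := congrArg Fin.val h
      simp at this
    obtain ⟨p0, hp0mem, hp0min⟩ := pairs.exists_min_image (fun p => |t p.1 - t p.2|) hpairs_ne
    set d := |t p0.1 - t p0.2| with hd
    have hp0ne : p0.1 ≠ p0.2 := by
      have := hp0mem
      simp only [hpairs, Finset.mem_filter] at this
      exact this.2
    have hdpos : 0 < d := by
      rw [hd, abs_pos, sub_ne_zero]
      exact fun h => hp0ne (htinj h)
    set ε := d/3 with hε
    have hεpos : 0 < ε := by positivity
    set C : Fin (r+2) → Set ℝ := fun j =>
      Set.Ico (0:ℝ) 1 ∩ G ⁻¹' Metric.ball (t j) ε with hC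
    have hCmeas : ∀ j, MeasurableSet (C j) :=
      fun j => hXmeas.inter (hGmeas measurableSet_ball)
    have hCsub : ∀ j, C j ⊆ Set.Ico (0:ℝ) 1 := fun j => Set.inter_subset_left
    have hCpos : ∀ j, volume (C j) ≠ 0 := by
      intro j
      have h1 := htS j ε hεpos
      rw [hmeasM _ (hGmeas measurableSet_ball), Set.inter_comm] at h1
      exact h1
    have hCdisj : ∀ j k, j ≠ k → Disjoint (C j) (C k) := by
      intro j k hjk
      refine Set.disjoint_left.2 fun x hxj hxk => ?_
      have h1 : dist (G x) (t j) < ε := hxj.2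
      have h2 : dist (G x) (t k) < ε := hxk.2
      have h3 : d ≤ |t j - t k| := by
        refine hp0min (j,k) ?_
        simp only [hpairs, Finset.mem_filter, Finset.mem_product, Finset.mem_univ, true_and]
        exact hjk
      have h4 : |t j - t k| ≤ |G x - t j| + |G x - t k| := by
        have h5 : t j - t k = -(G x - t j) + (G x - t k) := by ring
        rw [h5]
        refine le_trans (abs_add_le _ _) ?_
        rw [abs_neg]
      rw [Real.dist_eq] at h1 h2
      have hε3 : ε = d/3 := hε
      linarith
    -- invariance of the sets C j
    have hNmeas : MeasurableSet {x : ℝ | ¬ G (T x) = G x} :=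
      (measurableSet_eq_fun (hGmeas.comp hTmeas) hGmeas).compl
    have hN : volume ({x : ℝ | ¬ G (T x) = G x} ∩ Set.Ico 0 1) = 0 := by
      have h1 := hGinv
      rw [ae_iff] at h1
      rwa [hmeasM _ hNmeas] at h1
    have hCinv : ∀ j, (T ⁻¹' (C j) ∩ Set.Ico (0:ℝ) 1 : Set ℝ) =ᵐ[volume] C j := by
      intro j
      rw [MeasureTheory.ae_eq_set]
      constructor
      · refine measure_mono_null (fun x hx => ?_) hN
        refine ⟨?_, hx.1.2⟩
        intro hGeq
        apply hx.2
        refine ⟨hx.1.2, ?_⟩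
        have h5 : G (T x) ∈ Metric.ball (t j) ε := hx.1.1.2
        show G x ∈ Metric.ball (t j) ε
        rw [← hGeq]
        exact h5
      · refine measure_mono_null (fun x hx => ?_) hN
        refine ⟨?_, hx.1.1⟩
        intro hGeq
        apply hx.2
        constructor
        · refine Set.mem_preimage.2 ⟨hbij.mapsTo hx.1.1, ?_⟩
          show G (T x) ∈ Metric.ball (t j) ε
          rw [hGeq]
          exact hx.1.2
        · exact hx.1.1
    -- the cocycle identity
    have hFco : ∀ j (i : Fin r), ∀ x ∈ I i,
        cdf (C j) (T x) = cdf (C j) x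
          + (cdf (C j) (β i.castSucc + γ i) - cdf (C j) (β i.castSucc)) := by
      intro j i x hx
      have hTa : T x = x + γ i := hTpiece i x hx
      have ha0 : 0 ≤ β i.castSucc := hβnonneg _
      have hax : β i.castSucc ≤ x := hx.1
      have hmem : β i.castSucc ∈ I i := ⟨le_refl _, hβmono (Fin.castSucc_lt_succ (i := i))⟩
      have hc0 : 0 ≤ β i.castSucc + γ i := by
        have h6 := hbij.mapsTo (hIsubX i hmem)
        rw [hTpiece i _ hmem] at h6
        exact h6.1
      have hsub2 : Set.Ico (β i.castSucc) x ⊆ Set.Ico (0:ℝ) 1 :=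
        Set.Ico_subset_Ico ha0 (hIsubX i hx).2.le
      have hTu : ∀ u ∈ Set.Ico (β i.castSucc) x, T u = u + γ i := by
        intro u hu
        exact hTpiece i u ⟨hu.1, hu.2.trans hx.2⟩
      have h7 := cdf_translate (hCmeas j) (hCinv j) ha0 hax hc0 hsub2 hTu
      rw [hTa]
      linarith
    -- linear dependence of the translation vectors
    set v : Fin (r+2) → (Fin r → ℝ) := fun j i =>
      cdf (C j) (β i.castSucc + γ i) - cdf (C j) (β i.castSucc) with hv
    have hdep : ¬ LinearIndependent ℝ v := by
      intro hli
      have h1 := hli.fintype_card_le_finrank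
      rw [Module.finrank_fin_fun] at h1
      simp only [Fintype.card_fin] at h1
      omega
    obtain ⟨a, hsum, j0, hj0⟩ := Fintype.not_linearIndependent_iff.1 hdep
    set D : ℝ → ℝ := fun x => ∑ j, a j * cdf (C j) x with hD
    have hDcont : Continuous D := by
      refine continuous_finset_sum _ fun j _ => ?_
      exact continuous_const.mul (cdf_continuous (hCmeas j))
    have hDinv : ∀ x ∈ Set.Ico (0:ℝ) 1, D (T x) = D x := by
      intro x hx
      obtain ⟨i, hxi⟩ := hpiece_mem x hx
      have h0 : ∑ j, a j * v j i = 0 := by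
        have h1 := congrFun hsum i
        rw [Finset.sum_apply] at h1
        simpa [Pi.smul_apply, smul_eq_mul] using h1
      calc D (T x) = ∑ j, (a j * cdf (C j) x + a j * v j i) := by
            refine Finset.sum_congr rfl fun j _ => ?_
            rw [hFco j i x hxi, hv]
            ring
        _ = D x + ∑ j, a j * v j i := by rw [Finset.sum_add_distrib]
        _ = D x := by rw [h0, add_zero]
    have hDconst := eq_on_of_invariant T htrans hbij.mapsTo D hDcont hDinv
    have hD0mem : (0:ℝ) ∈ Set.Ico (0:ℝ) 1 := ⟨le_refl 0, zero_lt_one⟩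
    have hD0 : D 0 = 0 := by
      rw [hD]
      refine Finset.sum_eq_zero fun j _ => ?_
      rw [cdf_of_nonpos (le_refl 0), mul_zero]
    have hDX : ∀ x ∈ Set.Ico (0:ℝ) 1, D x = 0 := fun x hx => by
      rw [hDconst x hx 0 hD0mem, hD0]
    have hD1 : D 1 = 0 := by
      have hclosed : IsClosed (D ⁻¹' {0}) := isClosed_singleton.preimage hDcont
      have hsub3 : closure (Set.Ico (0:ℝ) 1) ⊆ D ⁻¹' {0} :=
        closure_minimal (fun x hx => hDX x hx) hclosed
      have h1 : (1:ℝ) ∈ closure (Set.Ico (0:ℝ) 1) := by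
        rw [closure_Ico (zero_ne_one)]
        exact ⟨zero_le_one, le_refl 1⟩
      exact hsub3 h1
    -- the positive and negative part measures
    set P : Measure ℝ := ∑ j, (ENNReal.ofReal (a j)) • (volume.restrict (C j)) with hP
    set Nm : Measure ℝ := ∑ j, (ENNReal.ofReal (-a j)) • (volume.restrict (C j)) with hNm
    have hPapp : ∀ (s : Set ℝ), MeasurableSet s →
        P s = ∑ j, ENNReal.ofReal (a j) * volume (s ∩ C j) := by
      intro s hs
      rw [hP, Measure.finset_sum_apply]
      refine Finset.sum_congr rfl fun j _ => ?_
      rw [Measure.smul_apply, smul_eq_mul, Measure.restrict_apply hs]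
    have hNapp : ∀ (s : Set ℝ), MeasurableSet s →
        Nm s = ∑ j, ENNReal.ofReal (-a j) * volume (s ∩ C j) := by
      intro s hs
      rw [hNm, Measure.finset_sum_apply]
      refine Finset.sum_congr rfl fun j _ => ?_
      rw [Measure.smul_apply, smul_eq_mul, Measure.restrict_apply hs]
    have hCvolfin : ∀ j, volume (C j) ≠ ⊤ := by
      intro j
      refine ne_top_of_le_ne_top ?_ (measure_mono (hCsub j))
      rw [Real.volume_Ico]
      exact ENNReal.ofReal_ne_top
    haveI hPfin : IsFiniteMeasure P := by
      constructor
      rw [hPapp _ MeasurableSet.univ]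
      rw [lt_top_iff_ne_top]
      refine ENNReal.sum_ne_top.2 fun j _ => ?_
      exact ENNReal.mul_ne_top ENNReal.ofReal_ne_top
        (ne_top_of_le_ne_top (hCvolfin j) (measure_mono Set.inter_subset_right))
    -- P and Nm agree on all Iio
    have hIio : ∀ (j : Fin (r+2)) (x : ℝ), 0 < x →
        Set.Iio x ∩ C j = C j ∩ Set.Ico 0 (min x 1) := by
      intro j x hx
      ext u
      simp only [Set.mem_inter_iff, Set.mem_Iio, Set.mem_Ico, lt_min_iff]
      constructor
      · rintro ⟨h1, h2⟩
        have h3 := (hCsub j) h2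
        exact ⟨h2, h3.1, h1, h3.2⟩
      · rintro ⟨h1, _, h2, _⟩
        exact ⟨h2, h1⟩
    have hvol_ofReal : ∀ (j : Fin (r+2)) (y : ℝ),
        volume (C j ∩ Set.Ico 0 y) = ENNReal.ofReal (cdf (C j) y) := by
      intro j y
      rw [cdf, ENNReal.ofReal_toReal (vol_ne_top _)]
    have hPN : ∀ x : ℝ, P (Set.Iio x) = Nm (Set.Iio x) := by
      intro x
      rw [hPapp _ measurableSet_Iio, hNapp _ measurableSet_Iio]
      rcases le_or_gt x 0 with hx | hx
      · have hempty : ∀ j, Set.Iio x ∩ C j = (∅ : Set ℝ) := by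
          intro j
          ext u
          simp only [Set.mem_inter_iff, Set.mem_Iio, Set.mem_empty_iff_false, iff_false,
            not_and]
          intro h1 h2
          exact absurd (h1.trans_le hx) (not_lt.2 ((hCsub j) h2).1)
        simp only [hempty, measure_empty, mul_zero, Finset.sum_const_zero]
      · set y := min x 1 with hy
        have hy0 : 0 ≤ y := le_min hx.le zero_le_one
        have hDy : D y = 0 := by
          rcases lt_or_ge y 1 with h | h
          · exact hDX y ⟨hy0, h⟩
          · have h2 : y = 1 := le_antisymm (min_le_right _ _) h
            rw [h2]
            exact hD1
        have hterm : ∀ j : Fin (r+2),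
            volume (Set.Iio x ∩ C j) = ENNReal.ofReal (cdf (C j) y) := by
          intro j
          rw [hIio j x hx, hvol_ofReal]
        simp only [hterm]
        have hne1 : (∑ j, ENNReal.ofReal (a j) * ENNReal.ofReal (cdf (C j) y)) ≠ ⊤ :=
          ENNReal.sum_ne_top.2 fun j _ =>
            ENNReal.mul_ne_top ENNReal.ofReal_ne_top ENNReal.ofReal_ne_top
        have hne2 : (∑ j, ENNReal.ofReal (-a j) * ENNReal.ofReal (cdf (C j) y)) ≠ ⊤ :=
          ENNReal.sum_ne_top.2 fun j _ =>
            ENNReal.mul_ne_top ENNReal.ofReal_ne_top ENNReal.ofReal_ne_top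
        refine (ENNReal.toReal_eq_toReal_iff' hne1 hne2).1 ?_
        rw [ENNReal.toReal_sum (fun j _ =>
          ENNReal.mul_ne_top ENNReal.ofReal_ne_top ENNReal.ofReal_ne_top),
          ENNReal.toReal_sum (fun j _ =>
          ENNReal.mul_ne_top ENNReal.ofReal_ne_top ENNReal.ofReal_ne_top)]
        have hterm2 : ∀ j : Fin (r+2),
            (ENNReal.ofReal (a j) * ENNReal.ofReal (cdf (C j) y)).toReal
            = max (a j) 0 * cdf (C j) y := by
          intro j
          rw [ENNReal.toReal_mul, ENNReal.toReal_ofReal', ENNReal.toReal_ofReal (cdf_nonneg _ _)]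
        have hterm3 : ∀ j : Fin (r+2),
            (ENNReal.ofReal (-a j) * ENNReal.ofReal (cdf (C j) y)).toReal
            = max (-a j) 0 * cdf (C j) y := by
          intro j
          rw [ENNReal.toReal_mul, ENNReal.toReal_ofReal', ENNReal.toReal_ofReal (cdf_nonneg _ _)]
        simp only [hterm2, hterm3]
        rw [← sub_eq_zero, ← Finset.sum_sub_distrib]
        have hterm4 : ∀ j : Fin (r+2),
            max (a j) 0 * cdf (C j) y - max (-a j) 0 * cdf (C j) y = a j * cdf (C j) y := by
          intro j
          rw [← sub_mul, max_zero_sub_max_neg_zero_eq_self]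
        simp only [hterm4]
        exact hDy
    have hPsing : ∀ x : ℝ, P {x} = 0 := by
      intro x
      rw [hPapp _ (measurableSet_singleton x)]
      refine Finset.sum_eq_zero fun j _ => ?_
      rw [measure_mono_null Set.inter_subset_left Real.volume_singleton, mul_zero]
    have hNsing : ∀ x : ℝ, Nm {x} = 0 := by
      intro x
      rw [hNapp _ (measurableSet_singleton x)]
      refine Finset.sum_eq_zero fun j _ => ?_
      rw [measure_mono_null Set.inter_subset_left Real.volume_singleton, mul_zero]
    have hPNIic : ∀ x : ℝ, P (Set.Iic x) = Nm (Set.Iic x) := by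
      intro x
      have hsplit : Set.Iic x = Set.Iio x ∪ {x} := by
        ext u
        simp only [Set.mem_Iic, Set.mem_union, Set.mem_Iio, Set.mem_singleton_iff]
        exact ⟨fun h => h.lt_or_eq, fun h => h.elim le_of_lt le_of_eq⟩
      have hdisj9 : Disjoint (Set.Iio x) ({x} : Set ℝ) := by
        refine Set.disjoint_left.2 fun u hu hu' => ?_
        rw [Set.mem_singleton_iff] at hu'
        exact absurd (hu' ▸ hu) (lt_irrefl x)
      rw [hsplit, measure_union hdisj9 (measurableSet_singleton x),
        measure_union hdisj9 (measurableSet_singleton x), hPN x, hPsing, hNsing]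
    have hPNeq : P = Nm := MeasureTheory.Measure.ext_of_Iic P Nm hPNIic
    have hPC : P (C j0) = ENNReal.ofReal (a j0) * volume (C j0) := by
      rw [hPapp _ (hCmeas j0)]
      rw [Finset.sum_eq_single j0]
      · rw [Set.inter_self]
      · intro j _ hj
        have hj' : C j0 ∩ C j = ∅ :=
          Set.disjoint_iff_inter_eq_empty.1 (hCdisj j0 j (fun h => hj h.symm))
        rw [hj', measure_empty, mul_zero]
      · intro h
        exact absurd (Finset.mem_univ j0) h
    have hNC : Nm (C j0) = ENNReal.ofReal (-a j0) * volume (C j0) := by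
      rw [hNapp _ (hCmeas j0)]
      rw [Finset.sum_eq_single j0]
      · rw [Set.inter_self]
      · intro j _ hj
        have hj' : C j0 ∩ C j = ∅ :=
          Set.disjoint_iff_inter_eq_empty.1 (hCdisj j0 j (fun h => hj h.symm))
        rw [hj', measure_empty, mul_zero]
      · intro h
        exact absurd (Finset.mem_univ j0) h
    have heq9 : ENNReal.ofReal (a j0) * volume (C j0)
        = ENNReal.ofReal (-a j0) * volume (C j0) := by
      rw [← hPC, ← hNC, hPNeq]
    rcases lt_trichotomy (a j0) 0 with hneg | hzero | hpos
    · rw [ENNReal.ofReal_eq_zero.2 hneg.le, zero_mul] at heq9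
      have h8 : ENNReal.ofReal (-a j0) ≠ 0 := by
        rw [Ne, ENNReal.ofReal_eq_zero]
        push_neg
        linarith
      exact absurd heq9.symm (mul_ne_zero h8 (hCpos j0))
    · exact hj0 hzero
    · rw [ENNReal.ofReal_eq_zero.2 (by linarith : -a j0 ≤ 0), zero_mul] at heq9
      have h8 : ENNReal.ofReal (a j0) ≠ 0 := by
        rw [Ne, ENNReal.ofReal_eq_zero]
        push_neg
        linarith
      exact absurd heq9 (mul_ne_zero h8 (hCpos j0))
  -- final assembly
  set Sf := hSfin.toFinset with hSf
  set nn := Sf.card with hnn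
  set l : Fin nn ≃o {y // y ∈ Sf} := Sf.orderIsoOfFin rfl with hl
  refine ⟨nn, fun i => (l i : ℝ), fun i => G ⁻¹' {((l i : ℝ))},
    fun i => hGmeas (measurableSet_singleton _), ?_⟩
  filter_upwards [haeS] with x hx
  have hxSf : G x ∈ Sf := hSfin.mem_toFinset.2 hx
  have hsum : ∑ i, (l i : ℝ) * (G ⁻¹' {((l i : ℝ))}).indicator (fun _ => (1:ℝ)) x
      = G x := by
    set i0 := l.symm ⟨G x, hxSf⟩ with hi0
    have hci0 : ((l i0 : ℝ)) = G x := by rw [hi0, OrderIso.apply_symm_apply]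
    rw [Finset.sum_eq_single i0]
    · rw [Set.indicator_of_mem, mul_one, hci0]
      rw [Set.mem_preimage, Set.mem_singleton_iff, hci0]
    · intro i _ hi
      rw [Set.indicator_of_notMem, mul_zero]
      rw [Set.mem_preimage, Set.mem_singleton_iff]
      intro hGx
      apply hi
      have h9 : (⟨G x, hxSf⟩ : {y // y ∈ Sf}) = l i := Subtype.ext hGx
      rw [hi0, h9, OrderIso.symm_apply_apply]
    · intro h
      exact absurd (Finset.mem_univ _) h
  show (μ.rnDeriv m x).toReal
      = ∑ i, (l i : ℝ) * (G ⁻¹' {((l i : ℝ))}).indicator (fun _ => (1:ℝ)) x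
  rw [hsum]
end
end

section
/- Let T : [0,1) → [0,1) be a topologically transitive interval exchange transformation and let m be Lebesgue measure on [0,1). If μ is an absolutely continuous T-invariant probability measure with μ ≠ m, then every representative φ of the density dμ/dm is discontinuous at every point of [0,1), and the support of μ is all of [0,1) (i.e., μ(U) > 0 for every nonempty open U ⊆ [0,1)). -/
open MeasureTheory Set Function Metric Filter Topology

noncomputable section

namespace IET8

/-- Bundled data of an IET. -/
structure Data (T : ℝ → ℝ) where
  r : ℕ
  β : Fin (r+1) → ℝ
  γ : Fin r → ℝ
  mono : StrictMono β
  h0 : β 0 = 0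
  h1 : β (Fin.last r) = 1
  heq : ∀ i : Fin r, ∀ x ∈ Set.Ico (β i.castSucc) (β i.succ), T x = x + γ i
  bij : Set.BijOn T (Set.Ico 0 1) (Set.Ico 0 1)
  meas : Measurable T

variable {T : ℝ → ℝ}

abbrev X : Set ℝ := Set.Ico (0:ℝ) 1

lemma measurableSet_X : MeasurableSet X := measurableSet_Ico

def Data.J (d : Data T) (i : Fin d.r) : Set ℝ := Set.Ico (d.β i.castSucc) (d.β i.succ)

lemma Data.J_subset (d : Data T) (i : Fin d.r) : d.J i ⊆ X := by
  intro x hx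
  constructor
  · exact le_trans (by rw [← d.h0]; exact d.mono.monotone (Fin.zero_le _)) hx.1
  · exact lt_of_lt_of_le hx.2 (by rw [← d.h1]; exact d.mono.monotone (Fin.le_last _))

lemma Data.exists_mem_J (d : Data T) {x : ℝ} (hx : x ∈ X) : ∃ i, x ∈ d.J i := by
  classical
  have hr : 0 < d.r + 1 := Nat.succ_pos _
  set s : Finset (Fin (d.r+1)) := Finset.univ.filter (fun j => d.β j ≤ x) with hs
  have h0s : (0 : Fin (d.r+1)) ∈ s := by
    refine Finset.mem_filter.2 ⟨Finset.mem_univ _, ?_⟩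
    rw [d.h0]; exact hx.1
  have hsne : s.Nonempty := ⟨0, h0s⟩
  set i₀ := s.max' hsne with hi₀def
  have hi₀ : d.β i₀ ≤ x := (Finset.mem_filter.1 (s.max'_mem hsne)).2
  have hne : i₀ ≠ Fin.last d.r := by
    intro h
    rw [h, d.h1] at hi₀
    exact absurd hi₀ (not_le.2 hx.2)
  refine ⟨i₀.castPred hne, ?_, ?_⟩
  · rw [Fin.castSucc_castPred]; exact hi₀
  · by_contra h
    push_neg at h
    have hmem : (i₀.castPred hne).succ ∈ s := Finset.mem_filter.2 ⟨Finset.mem_univ _, h⟩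
    have h2 : (i₀.castPred hne).succ ≤ i₀ := s.le_max' _ hmem
    have h3 : i₀ < (i₀.castPred hne).succ := by
      conv_lhs => rw [← Fin.castSucc_castPred i₀ hne]
      exact Fin.castSucc_lt_succ
    exact absurd h2 (not_le.2 h3)

lemma Data.iUnion_J (d : Data T) : (⋃ i, d.J i) = X := by
  apply Subset.antisymm
  · exact iUnion_subset d.J_subset
  · intro x hx
    obtain ⟨i, hi⟩ := d.exists_mem_J hx
    exact mem_iUnion.2 ⟨i, hi⟩

lemma Data.disj_J_lt (d : Data T) {i j : Fin d.r} (h : i < j) : Disjoint (d.J i) (d.J j) := by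
  apply Set.disjoint_left.2
  intro x hxi hxj
  have h1 : d.β i.succ ≤ d.β j.castSucc := by
    apply d.mono.monotone
    rw [Fin.le_def]
    simpa [Fin.val_succ] using h
  exact absurd (lt_of_lt_of_le hxi.2 (le_trans h1 hxj.1)) (lt_irrefl x)

lemma Data.disj_J (d : Data T) : Pairwise (Function.onFun Disjoint d.J) := by
  intro i j hij
  rcases Ne.lt_or_gt hij with h | h
  · exact d.disj_J_lt h
  · exact (d.disj_J_lt h).symm

lemma Data.T_eq (d : Data T) {i : Fin d.r} {x : ℝ} (hx : x ∈ d.J i) : T x = x + d.γ i :=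
  d.heq i x hx

lemma Data.image_J (d : Data T) (i : Fin d.r) :
    T '' d.J i = Set.Ico (d.β i.castSucc + d.γ i) (d.β i.succ + d.γ i) := by
  rw [← Set.image_add_const_Ico (d.γ i)]
  exact Set.image_congr (fun x hx => d.T_eq hx)

lemma Data.injOn (d : Data T) : Set.InjOn T X := d.bij.injOn

lemma Data.mapsTo (d : Data T) : Set.MapsTo T X X := d.bij.mapsTo

lemma Data.image_X (d : Data T) : T '' X = X := d.bij.image_eq

lemma Data.iUnion_image_J (d : Data T) : (⋃ i, T '' d.J i) = X := by
  rw [← Set.image_iUnion, d.iUnion_J, d.image_X]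

lemma Data.disj_image_J (d : Data T) :
    Pairwise (Function.onFun Disjoint (fun i => T '' d.J i)) := by
  intro i j hij
  apply Set.disjoint_left.2
  rintro x ⟨a, ha, rfl⟩ ⟨b, hb, hab⟩
  have hab' : b = a := d.injOn (d.J_subset j hb) (d.J_subset i ha) hab
  exact (d.disj_J hij).le_bot ⟨ha, hab' ▸ hb⟩

lemma Data.image_decomp (d : Data T) {B : Set ℝ} (hB : B ⊆ X) :
    T '' B = ⋃ i, (fun x => x + d.γ i) '' (B ∩ d.J i) := by
  have : B = ⋃ i, B ∩ d.J i := by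
    rw [← Set.inter_iUnion, d.iUnion_J, Set.inter_eq_left.2 hB]
  conv_lhs => rw [this]
  rw [Set.image_iUnion]
  exact Set.iUnion_congr (fun i => Set.image_congr (fun x hx => d.T_eq hx.2))

lemma Data.measurable_image (d : Data T) {B : Set ℝ} (hB : B ⊆ X) (hBm : MeasurableSet B) :
    MeasurableSet (T '' B) := by
  rw [d.image_decomp hB]
  apply MeasurableSet.iUnion
  intro i
  have : (fun x => x + d.γ i) '' (B ∩ d.J i) = (fun x => x - d.γ i) ⁻¹' (B ∩ d.J i) := by
    ext y; constructor
    · rintro ⟨x, hx, rfl⟩; simpa using hx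
    · intro hy; exact ⟨y - d.γ i, hy, by ring⟩
  rw [this]
  exact (measurable_sub_const _) (hBm.inter (measurableSet_Ico))

lemma volume_image_add_const (a : ℝ) (s : Set ℝ) :
    volume ((fun x => x + a) '' s) = volume s := by
  have : (fun x => x + a) '' s = (fun x => x - a) ⁻¹' s := by
    ext y; constructor
    · rintro ⟨x, hx, rfl⟩; simpa using hx
    · intro hy; exact ⟨y - a, hy, by ring⟩
  rw [this]
  have := measure_preimage_add_right (volume : Measure ℝ) (-a) s
  simpa [sub_eq_add_neg] using this

lemma Data.null_image (d : Data T) {N : Set ℝ} (hN : N ⊆ X) (h0 : volume N = 0) :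
    volume (T '' N) = 0 := by
  rw [d.image_decomp hN]
  refine measure_iUnion_null (fun i => ?_)
  rw [volume_image_add_const]
  exact measure_mono_null Set.inter_subset_left h0

lemma Data.preserve (d : Data T) {A : Set ℝ} (hA : MeasurableSet A) :
    volume (T ⁻¹' A ∩ X) = volume (A ∩ X) := by
  have hdecomp : T ⁻¹' A ∩ X = ⋃ i, T ⁻¹' A ∩ d.J i := by
    rw [← Set.inter_iUnion, d.iUnion_J]
  have hpiece : ∀ i, T ⁻¹' A ∩ d.J i = (fun x => x + d.γ i) ⁻¹' (A ∩ (T '' d.J i)) := by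
    intro i
    rw [d.image_J]
    ext x
    simp only [Set.mem_inter_iff, Set.mem_preimage]
    constructor
    · rintro ⟨hxA, hxJ⟩
      refine ⟨by rwa [← d.T_eq hxJ], ?_⟩
      exact ⟨by linarith [hxJ.1], by linarith [hxJ.2]⟩
    · rintro ⟨hxA, hxI⟩
      have hxJ : x ∈ d.J i := ⟨le_of_add_le_add_right hxI.1, lt_of_add_lt_add_right hxI.2⟩
      exact ⟨by rwa [d.T_eq hxJ], hxJ⟩
  rw [hdecomp, measure_iUnion ?_ ?_]
  · have : ∀ i, volume (T ⁻¹' A ∩ d.J i) = volume (A ∩ (T '' d.J i)) := by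
      intro i
      rw [hpiece i]
      exact measure_preimage_add_right volume _ _
    rw [tsum_congr this, ← measure_iUnion ?_ ?_]
    · rw [← Set.inter_iUnion, d.iUnion_image_J, Set.inter_comm]
    · intro i j hij
      exact Set.disjoint_left.2 fun x hx hx' =>
        (d.disj_image_J hij).le_bot ⟨hx.2, hx'.2⟩
    · intro i
      rw [d.image_J]; exact hA.inter measurableSet_Ico
  · intro i j hij
    exact Set.disjoint_left.2 fun x hx hx' => (d.disj_J hij).le_bot ⟨hx.2, hx'.2⟩
  · intro i
    exact (d.meas hA).inter measurableSet_Ico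


/-! ### Part II : orbit sets -/

variable {T : ℝ → ℝ}

def orb (U : Set ℝ) (T : ℝ → ℝ) : Set ℝ := {x | x ∈ X ∧ ∃ p q : ℕ, T^[p] x ∈ T^[q] '' U}

lemma orb_subset (U : Set ℝ) : orb U T ⊆ X := fun _ h => h.1

lemma Data.bijOn_iter (d : Data T) (n : ℕ) : Set.BijOn T^[n] X X := d.bij.iterate n

lemma Data.image_iter_subset_X (d : Data T) {U : Set ℝ} (hU : U ⊆ X) (q : ℕ) :
    T^[q] '' U ⊆ X := fun y ⟨x, hx, he⟩ => he ▸ (d.bijOn_iter q).mapsTo (hU hx)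

lemma subset_orb (d : Data T) {U : Set ℝ} (hU : U ⊆ X) : U ⊆ orb U T := by
  intro x hx
  exact ⟨hU hx, 0, 0, by simpa using hx⟩

lemma orb_nonempty (d : Data T) {U : Set ℝ} (hU : U ⊆ X) (hne : U.Nonempty) :
    (orb U T).Nonempty := hne.mono (subset_orb d hU)

lemma T_mem_orb (d : Data T) {U : Set ℝ} {x : ℝ} (hx : x ∈ orb U T) : T x ∈ orb U T := by
  obtain ⟨hxX, p, q, hpq⟩ := hx
  refine ⟨d.mapsTo hxX, p, q + 1, ?_⟩
  have h1 : T^[p] (T x) = T (T^[p] x) := by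
    rw [← Function.iterate_succ_apply, Function.iterate_succ_apply']
  rw [h1, Function.iterate_succ', Set.image_comp]
  exact Set.mem_image_of_mem T hpq

lemma mem_orb_of_T (d : Data T) {U : Set ℝ} {x : ℝ} (hxX : x ∈ X) (hx : T x ∈ orb U T) :
    x ∈ orb U T := by
  obtain ⟨_, p, q, hpq⟩ := hx
  refine ⟨hxX, p + 1, q, ?_⟩
  rwa [Function.iterate_succ_apply]

lemma image_orb (d : Data T) {U : Set ℝ} : T '' orb U T = orb U T := by
  apply Subset.antisymm
  · rintro y ⟨x, hx, rfl⟩; exact T_mem_orb d hx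
  · intro y hy
    have hyX : y ∈ X := hy.1
    obtain ⟨x, hxX, rfl⟩ := d.image_X ▸ hyX
    exact ⟨x, mem_orb_of_T d hxX hy, rfl⟩

lemma image_compl_orb (d : Data T) {U : Set ℝ} : T '' (X \ orb U T) = X \ orb U T := by
  apply Subset.antisymm
  · rintro y ⟨x, ⟨hxX, hxA⟩, rfl⟩
    exact ⟨d.mapsTo hxX, fun h => hxA (mem_orb_of_T d hxX h)⟩
  · rintro y ⟨hyX, hyA⟩
    obtain ⟨x, hxX, rfl⟩ := d.image_X ▸ hyX
    exact ⟨x, ⟨hxX, fun h => hyA (T_mem_orb d h)⟩, rfl⟩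

lemma orb_eq_iUnion (d : Data T) (U : Set ℝ) :
    orb U T = ⋃ p : ℕ, (T^[p] ⁻¹' (⋃ q : ℕ, T^[q] '' U)) ∩ X := by
  ext x
  simp only [orb, Set.mem_setOf_eq, Set.mem_iUnion, Set.mem_inter_iff, Set.mem_preimage]
  constructor
  · rintro ⟨hxX, p, q, h⟩; exact ⟨p, ⟨q, h⟩, hxX⟩
  · rintro ⟨p, ⟨q, h⟩, hxX⟩; exact ⟨hxX, p, q, h⟩

lemma Data.measurable_image_iter (d : Data T) {U : Set ℝ} (hU : U ⊆ X)
    (hUm : MeasurableSet U) (q : ℕ) : MeasurableSet (T^[q] '' U) := by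
  induction q with
  | zero => simpa using hUm
  | succ n ih =>
      rw [Function.iterate_succ', Set.image_comp]
      exact d.measurable_image (d.image_iter_subset_X hU n) ih

lemma measurable_orb (d : Data T) {U : Set ℝ} (hU : U ⊆ X) (hUm : MeasurableSet U) :
    MeasurableSet (orb U T) := by
  rw [orb_eq_iUnion d]
  exact MeasurableSet.iUnion fun p =>
    ((d.meas.iterate p) (MeasurableSet.iUnion fun q =>
      d.measurable_image_iter hU hUm q)).inter measurableSet_X

/-! ### Right-thickness -/

def RThick (S : Set ℝ) : Prop := ∀ x ∈ S, ∃ e, x < e ∧ Set.Ico x e ⊆ S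

lemma RThick.iUnion {ι : Sort*} {S : ι → Set ℝ} (h : ∀ i, RThick (S i)) :
    RThick (⋃ i, S i) := by
  intro x hx
  obtain ⟨i, hi⟩ := Set.mem_iUnion.1 hx
  obtain ⟨e, he, hsub⟩ := h i x hi
  exact ⟨e, he, hsub.trans (Set.subset_iUnion S i)⟩

lemma RThick.relOpen {O : Set ℝ} (hO : IsOpen O) : RThick (X ∩ O) := by
  intro x hx
  obtain ⟨ε, hε, hball⟩ := Metric.isOpen_iff.1 hO x hx.2
  refine ⟨min (x + ε) 1, lt_min (by linarith) hx.1.2, fun z hz => ?_⟩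
  have h1 : z < x + ε := lt_of_lt_of_le hz.2 (min_le_left _ _)
  have h2 : z < 1 := lt_of_lt_of_le hz.2 (min_le_right _ _)
  refine ⟨⟨le_trans hx.1.1 hz.1, h2⟩, hball ?_⟩
  rw [Real.ball_eq_Ioo]
  exact ⟨by linarith [hz.1], h1⟩

lemma Data.rthick_image (d : Data T) {S : Set ℝ} (hS : S ⊆ X) (h : RThick S) :
    RThick (T '' S) := by
  rintro y ⟨x, hx, rfl⟩
  obtain ⟨e, he, hsub⟩ := h x hx
  obtain ⟨i, hi⟩ := d.exists_mem_J (hS hx)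
  have hxs : x < d.β i.succ := hi.2
  set e' := min e (d.β i.succ) with he'
  have he'x : x < e' := lt_min he hxs
  refine ⟨e' + d.γ i, by rw [d.T_eq hi]; linarith, fun w hw => ?_⟩
  rw [d.T_eq hi] at hw
  have hw1 : x ≤ w - d.γ i := by have := hw.1; linarith
  have hw2 : w - d.γ i < e' := by have := hw.2; linarith
  have hwS : w - d.γ i ∈ S := hsub ⟨hw1, lt_of_lt_of_le hw2 (min_le_left _ _)⟩
  have hwJ : w - d.γ i ∈ d.J i :=
    ⟨le_trans hi.1 hw1, lt_of_lt_of_le hw2 (min_le_right _ _)⟩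
  exact ⟨w - d.γ i, hwS, by rw [d.T_eq hwJ]; ring⟩

lemma Data.rthick_preimage (d : Data T) {S : Set ℝ} (h : RThick S) :
    RThick (T ⁻¹' S ∩ X) := by
  rintro x ⟨hxS, hxX⟩
  obtain ⟨e, he, hsub⟩ := h (T x) hxS
  obtain ⟨i, hi⟩ := d.exists_mem_J hxX
  have hTx : T x = x + d.γ i := d.T_eq hi
  set e' := min (e - d.γ i) (d.β i.succ) with he'
  have he'x : x < e' := lt_min (by rw [hTx] at he; linarith) hi.2
  refine ⟨e', he'x, fun z hz => ?_⟩
  have hzJ : z ∈ d.J i := ⟨le_trans hi.1 hz.1, lt_of_lt_of_le hz.2 (min_le_right _ _)⟩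
  have hz2 : z + d.γ i < e := by
    have := lt_of_lt_of_le hz.2 (min_le_left _ _); linarith
  refine ⟨?_, d.J_subset i hzJ⟩
  show T z ∈ S
  rw [d.T_eq hzJ]
  exact hsub ⟨by rw [hTx] at *; linarith [hz.1], hz2⟩

lemma Data.rthick_preimage_iter (d : Data T) {S : Set ℝ} (h : RThick S) (p : ℕ) :
    RThick (T^[p] ⁻¹' S ∩ X) := by
  induction p with
  | zero =>
      intro x hx
      obtain ⟨e, he, hsub⟩ := h x (by simpa using hx.1)
      have hthX : RThick (X ∩ Set.Ioo (-1 : ℝ) 1) := RThick.relOpen isOpen_Ioo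
      obtain ⟨e2, he2, hsub2⟩ := hthX x ⟨hx.2, ⟨by linarith [hx.2.1], hx.2.2⟩⟩
      refine ⟨min e e2, lt_min he he2, fun z hz => ?_⟩
      refine ⟨by simpa using hsub ⟨hz.1, lt_of_lt_of_le hz.2 (min_le_left _ _)⟩, ?_⟩
      exact (hsub2 ⟨hz.1, lt_of_lt_of_le hz.2 (min_le_right _ _)⟩).1
  | succ n ih =>
      have hstep : T^[n+1] ⁻¹' S ∩ X = (T ⁻¹' (T^[n] ⁻¹' S ∩ X)) ∩ X := by
        ext x
        simp only [Set.mem_inter_iff, Set.mem_preimage, Function.iterate_succ_apply]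
        constructor
        · rintro ⟨h1, h2⟩; exact ⟨⟨h1, d.mapsTo h2⟩, h2⟩
        · rintro ⟨⟨h1, _⟩, h2⟩; exact ⟨h1, h2⟩
      rw [hstep]
      exact d.rthick_preimage ih

lemma rthick_orb (d : Data T) {U : Set ℝ} (hU : U ⊆ X) (hth : RThick U) :
    RThick (orb U T) := by
  rw [orb_eq_iUnion d]
  apply RThick.iUnion
  intro p
  apply d.rthick_preimage_iter
  apply RThick.iUnion
  intro q
  induction q with
  | zero => simpa using hth
  | succ n ih =>
      rw [Function.iterate_succ', Set.image_comp]
      exact d.rthick_image (d.image_iter_subset_X hU n) ih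

/-! ### Part III a : gaps of the closure of the complement of an orbit -/

variable {T : ℝ → ℝ}

def K1 (T : ℝ → ℝ) (U : Set ℝ) : Set ℝ :=
  closure (X \ orb U T) ∪ Set.Iic 0 ∪ Set.Ici 1

lemma isClosed_K1 (T : ℝ → ℝ) (U : Set ℝ) : IsClosed (K1 T U) :=
  ((isClosed_closure.union isClosed_Iic).union isClosed_Ici)

lemma closure_F_subset (T : ℝ → ℝ) (U : Set ℝ) : closure (X \ orb U T) ⊆ Set.Icc 0 1 :=
  closure_minimal (fun x hx => ⟨hx.1.1, le_of_lt hx.1.2⟩) isClosed_Icc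

lemma mem_K1_cases {U : Set ℝ} {y : ℝ} (h : y ∈ K1 T U) (h0 : 0 < y) (h1 : y < 1) :
    y ∈ closure (X \ orb U T) := by
  rcases h with (h | h) | h
  · exact h
  · exact absurd h0 (not_lt.2 h)
  · exact absurd h1 (not_lt.2 h)

def IsGap (T : ℝ → ℝ) (U : Set ℝ) (p : ℝ × ℝ) : Prop :=
  p.1 < p.2 ∧ 0 ≤ p.1 ∧ p.2 ≤ 1 ∧ p.1 ∈ K1 T U ∧ p.2 ∈ K1 T U ∧
    Set.Ioo p.1 p.2 ∩ K1 T U = ∅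

lemma gap_Ioo_subset_X {U : Set ℝ} {p : ℝ × ℝ} (h : IsGap T U p) :
    Set.Ioo p.1 p.2 ⊆ X := fun z hz =>
  ⟨le_of_lt (lt_of_le_of_lt h.2.1 hz.1), lt_of_lt_of_le hz.2 h.2.2.1⟩

lemma exists_gap {U : Set ℝ} {x : ℝ} (hx : x ∈ Set.Ioo (0:ℝ) 1)
    (hxK : x ∉ closure (X \ orb U T)) :
    ∃ p : ℝ × ℝ, IsGap T U p ∧ x ∈ Set.Ioo p.1 p.2 := by
  have hxK1 : x ∉ K1 T U := by
    intro h
    rcases h with (h | h) | h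
    · exact hxK h
    · exact absurd hx.1 (not_lt.2 h)
    · exact absurd hx.2 (not_lt.2 h)
  set u := sSup (K1 T U ∩ Set.Iic x) with hu
  set v := sInf (K1 T U ∩ Set.Ici x) with hv
  have h0mem : (0:ℝ) ∈ K1 T U ∩ Set.Iic x := ⟨Or.inl (Or.inr (Set.mem_Iic.2 le_rfl)), le_of_lt hx.1⟩
  have h1mem : (1:ℝ) ∈ K1 T U ∩ Set.Ici x := ⟨Or.inr (Set.mem_Ici.2 le_rfl), le_of_lt hx.2⟩
  have hbddA : BddAbove (K1 T U ∩ Set.Iic x) := ⟨x, fun y hy => hy.2⟩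
  have hbddB : BddBelow (K1 T U ∩ Set.Ici x) := ⟨x, fun y hy => hy.2⟩
  have humem : u ∈ K1 T U ∩ Set.Iic x :=
    ((isClosed_K1 T U).inter isClosed_Iic).csSup_mem ⟨0, h0mem⟩ hbddA
  have hvmem : v ∈ K1 T U ∩ Set.Ici x :=
    ((isClosed_K1 T U).inter isClosed_Ici).csInf_mem ⟨1, h1mem⟩ hbddB
  have hux : u < x := lt_of_le_of_ne humem.2 (fun h => hxK1 (by rw [← h]; exact humem.1))
  have hxv : x < v := lt_of_le_of_ne hvmem.2 (fun h => hxK1 (by rw [h]; exact hvmem.1))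
  have h0u : 0 ≤ u := le_csSup hbddA h0mem
  have hv1 : v ≤ 1 := csInf_le hbddB h1mem
  refine ⟨(u, v), ⟨lt_trans hux hxv, h0u, hv1, humem.1, hvmem.1, ?_⟩, hux, hxv⟩
  ext w
  simp only [Set.mem_inter_iff, Set.mem_Ioo, Set.mem_empty_iff_false, iff_false, not_and]
  rintro ⟨hw1, hw2⟩ hwK
  rcases lt_trichotomy w x with h | h | h
  · exact absurd (le_csSup hbddA ⟨hwK, le_of_lt h⟩) (not_le.2 hw1)
  · exact hxK1 (h ▸ hwK)
  · exact absurd (csInf_le hbddB ⟨hwK, le_of_lt h⟩) (not_le.2 hw2)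

lemma gap_eq_of_inter {U : Set ℝ} {p q : ℝ × ℝ} (hp : IsGap T U p) (hq : IsGap T U q)
    (hne : (Set.Ioo p.1 p.2 ∩ Set.Ioo q.1 q.2).Nonempty) : p = q := by
  obtain ⟨w, hwp, hwq⟩ := hne
  have key : ∀ a b : ℝ × ℝ, IsGap T U a → IsGap T U b →
      w ∈ Set.Ioo a.1 a.2 → w ∈ Set.Ioo b.1 b.2 → a.1 ≤ b.1 := by
    intro a b ha hb hwa hwb
    by_contra h
    push_neg at h
    have : a.1 ∈ Set.Ioo b.1 b.2 := ⟨h, lt_trans hwa.1 hwb.2⟩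
    exact absurd (Set.mem_inter this ha.2.2.2.1) (by rw [hb.2.2.2.2.2]; exact fun h => h)
  have key2 : ∀ a b : ℝ × ℝ, IsGap T U a → IsGap T U b →
      w ∈ Set.Ioo a.1 a.2 → w ∈ Set.Ioo b.1 b.2 → a.2 ≤ b.2 := by
    intro a b ha hb hwa hwb
    by_contra h
    push_neg at h
    have : b.2 ∈ Set.Ioo a.1 a.2 := ⟨lt_trans hwa.1 hwb.2, h⟩
    exact absurd (Set.mem_inter this hb.2.2.2.2.1) (by rw [ha.2.2.2.2.2]; exact fun h => h)
  have h1 : p.1 = q.1 := le_antisymm (key p q hp hq hwp hwq) (key q p hq hp hwq hwp)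
  have h2 : p.2 = q.2 := le_antisymm (key2 p q hp hq hwp hwq) (key2 q p hq hp hwq hwp)
  exact Prod.ext h1 h2

lemma gap_eq_of_left {U : Set ℝ} {p q : ℝ × ℝ} (hp : IsGap T U p) (hq : IsGap T U q)
    (h : p.1 = q.1) : p = q := by
  apply gap_eq_of_inter hp hq
  have hq1 : p.1 < q.2 := h ▸ hq.1
  have hmin : p.1 < min p.2 q.2 := lt_min hp.1 hq1
  have hm1 : min p.2 q.2 ≤ p.2 := min_le_left _ _
  have hm2 : min p.2 q.2 ≤ q.2 := min_le_right _ _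
  refine ⟨(p.1 + min p.2 q.2) / 2, ⟨by linarith, by linarith⟩, ?_⟩
  rw [← h]
  exact ⟨by linarith, by linarith⟩

lemma gap_eq_of_right {U : Set ℝ} {p q : ℝ × ℝ} (hp : IsGap T U p) (hq : IsGap T U q)
    (h : p.2 = q.2) : p = q := by
  apply gap_eq_of_inter hp hq
  have hq1 : q.1 < p.2 := by rw [h]; exact hq.1
  have hmax : max p.1 q.1 < p.2 := max_lt hp.1 hq1
  have hm1 : p.1 ≤ max p.1 q.1 := le_max_left _ _
  have hm2 : q.1 ≤ max p.1 q.1 := le_max_right _ _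
  refine ⟨(max p.1 q.1 + p.2) / 2, ⟨by linarith, by linarith⟩, ?_⟩
  rw [← h]
  exact ⟨by linarith, by linarith⟩

/-- the finite set of "bad" points -/
def Pbad (d : Data T) : Set ℝ :=
  (⋃ i : Fin (d.r+1), {d.β i}) ∪ (⋃ i : Fin d.r, {d.β i.castSucc + d.γ i}) ∪
    (⋃ i : Fin d.r, ⋃ j : Fin d.r, {d.β j.castSucc + d.γ j - d.γ i}) ∪ {0, 1}

lemma Pbad_finite (d : Data T) : (Pbad d).Finite := by
  apply Set.Finite.union
  apply Set.Finite.union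
  apply Set.Finite.union
  · exact Set.finite_iUnion (fun i => Set.finite_singleton _)
  · exact Set.finite_iUnion (fun i => Set.finite_singleton _)
  · exact Set.finite_iUnion (fun i => Set.finite_iUnion (fun j => Set.finite_singleton _))
  · exact (Set.finite_singleton _).insert 0

lemma zero_mem_Pbad (d : Data T) : (0:ℝ) ∈ Pbad d := Or.inr (Or.inl rfl)
lemma one_mem_Pbad (d : Data T) : (1:ℝ) ∈ Pbad d := Or.inr (Or.inr rfl)
lemma beta_mem_Pbad (d : Data T) (i : Fin (d.r+1)) : d.β i ∈ Pbad d :=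
  Or.inl (Or.inl (Or.inl (Set.mem_iUnion.2 ⟨i, rfl⟩)))
lemma shift_mem_Pbad (d : Data T) (i j : Fin d.r) :
    d.β j.castSucc + d.γ j - d.γ i ∈ Pbad d :=
  Or.inl (Or.inr (Set.mem_iUnion.2 ⟨i, Set.mem_iUnion.2 ⟨j, rfl⟩⟩))

/-- translate a closure point of `F` inside a branch -/
lemma translate_mem_K (d : Data T) {U : Set ℝ} {y : ℝ} {i : Fin d.r}
    (hy : y ∈ closure (X \ orb U T))
    (hyb : y ∈ Set.Ioo (d.β i.castSucc) (d.β i.succ)) :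
    y + d.γ i ∈ closure (X \ orb U T) := by
  set O := Set.Ioo (d.β i.castSucc) (d.β i.succ)
  have h1 : y ∈ closure (O ∩ (X \ orb U T)) :=
    isOpen_Ioo.inter_closure ⟨hyb, hy⟩
  have h2 : (fun x => x + d.γ i) '' (O ∩ (X \ orb U T)) ⊆ X \ orb U T := by
    rintro w ⟨z, ⟨hzO, hzF⟩, rfl⟩
    have hzJ : z ∈ d.J i := ⟨le_of_lt hzO.1, hzO.2⟩
    show z + d.γ i ∈ X \ orb U T
    rw [← d.T_eq hzJ]
    rw [← image_compl_orb d (U := U)]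
    exact Set.mem_image_of_mem T hzF
  have h3 : y + d.γ i ∈ closure ((fun x => x + d.γ i) '' (O ∩ (X \ orb U T))) := by
    have := image_closure_subset_closure_image
      (f := fun x => x + d.γ i) (s := O ∩ (X \ orb U T)) (by continuity)
    exact this (Set.mem_image_of_mem _ h1)
  exact closure_mono h2 h3

/-- translate a closure point of `F` inside an image branch, backwards -/
lemma translate_mem_K_inv (d : Data T) {U : Set ℝ} {w : ℝ} {j : Fin d.r}
    (hw : w ∈ closure (X \ orb U T))
    (hwb : w ∈ Set.Ioo (d.β j.castSucc + d.γ j) (d.β j.succ + d.γ j)) :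
    w - d.γ j ∈ closure (X \ orb U T) := by
  set O := Set.Ioo (d.β j.castSucc + d.γ j) (d.β j.succ + d.γ j)
  have h1 : w ∈ closure (O ∩ (X \ orb U T)) :=
    isOpen_Ioo.inter_closure ⟨hwb, hw⟩
  have h2 : (fun x => x - d.γ j) '' (O ∩ (X \ orb U T)) ⊆ X \ orb U T := by
    rintro z ⟨f, ⟨hfO, hfF⟩, rfl⟩
    have hfI : f ∈ T '' d.J j := by
      rw [d.image_J]
      exact ⟨le_of_lt hfO.1, hfO.2⟩
    obtain ⟨s, hsJ, hsf⟩ := hfI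
    show f - d.γ j ∈ X \ orb U T
    have hfF' : f ∈ T '' (X \ orb U T) := by rw [image_compl_orb d]; exact hfF
    obtain ⟨s', hs', hs'f⟩ := hfF'
    have : s = s' := d.injOn (d.J_subset j hsJ) hs'.1 (by rw [hsf, hs'f])
    have hsF : s ∈ X \ orb U T := this ▸ hs'
    have : f - d.γ j = s := by rw [← hsf, d.T_eq hsJ]; ring
    rw [this]
    exact hsF
  have h3 : w - d.γ j ∈ closure ((fun x => x - d.γ j) '' (O ∩ (X \ orb U T))) := by
    have := image_closure_subset_closure_image
      (f := fun x => x - d.γ j) (s := O ∩ (X \ orb U T)) (by continuity)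
    exact this (Set.mem_image_of_mem _ h1)
  exact closure_mono h2 h3

lemma branch_of_Icc (d : Data T) {u v : ℝ} (huv : u < v) (h0 : 0 < u) (h1 : v < 1)
    (hP : ∀ i : Fin (d.r+1), d.β i ∉ Set.Icc u v) :
    ∃ i : Fin d.r, Set.Icc u v ⊆ Set.Ioo (d.β i.castSucc) (d.β i.succ) := by
  obtain ⟨i, hi⟩ := d.exists_mem_J (⟨le_of_lt h0, lt_trans huv h1⟩ : u ∈ X)
  have hne : d.β i.castSucc ≠ u := fun h => hP i.castSucc (by rw [h]; exact ⟨le_rfl, le_of_lt huv⟩)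
  have hlt : d.β i.castSucc < u := lt_of_le_of_ne hi.1 hne
  have hv : v < d.β i.succ := by
    by_contra h
    push_neg at h
    exact hP i.succ ⟨le_of_lt hi.2, h⟩
  exact ⟨i, fun z hz => ⟨lt_of_lt_of_le hlt hz.1, lt_of_le_of_lt hz.2 hv⟩⟩

/-- THE CORE STEP: a gap staying away from the bad points maps to a gap. -/
lemma gap_step (d : Data T) {U : Set ℝ} {p : ℝ × ℝ} (hp : IsGap T U p)
    (hP : Set.Icc p.1 p.2 ∩ Pbad d = ∅) :
    ∃ i : Fin d.r, Set.Icc p.1 p.2 ⊆ Set.Ioo (d.β i.castSucc) (d.β i.succ) ∧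
      IsGap T U (p.1 + d.γ i, p.2 + d.γ i) ∧
      T '' Set.Ioo p.1 p.2 = Set.Ioo (p.1 + d.γ i) (p.2 + d.γ i) := by
  obtain ⟨huv, h0u, hv1, huK1, hvK1, hgap⟩ := hp
  have hPmem : ∀ y ∈ Set.Icc p.1 p.2, y ∉ Pbad d := by
    intro y hy hyP
    exact absurd (Set.mem_inter hy hyP) (by rw [hP]; exact fun h => h)
  have h0 : 0 < p.1 := lt_of_le_of_ne h0u (fun h => hPmem p.1 ⟨le_rfl, le_of_lt huv⟩
    (h ▸ zero_mem_Pbad d))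
  have h1 : p.2 < 1 := lt_of_le_of_ne hv1 (fun h => hPmem p.2 ⟨le_of_lt huv, le_rfl⟩
    (h ▸ one_mem_Pbad d))
  have huK : p.1 ∈ closure (X \ orb U T) := mem_K1_cases huK1 h0 (lt_trans huv h1)
  have hvK : p.2 ∈ closure (X \ orb U T) := mem_K1_cases hvK1 (lt_trans h0 huv) h1
  obtain ⟨i, hIcc⟩ := branch_of_Icc d huv h0 h1
    (fun j hj => hPmem _ hj (beta_mem_Pbad d j))
  have hu' : p.1 + d.γ i ∈ closure (X \ orb U T) :=
    translate_mem_K d huK (hIcc ⟨le_rfl, le_of_lt huv⟩)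
  have hv' : p.2 + d.γ i ∈ closure (X \ orb U T) :=
    translate_mem_K d hvK (hIcc ⟨le_of_lt huv, le_rfl⟩)
  have h0u' : 0 ≤ p.1 + d.γ i := (closure_F_subset T U hu').1
  have hv1' : p.2 + d.γ i ≤ 1 := (closure_F_subset T U hv').2
  have himg : T '' Set.Ioo p.1 p.2 = Set.Ioo (p.1 + d.γ i) (p.2 + d.γ i) := by
    rw [← Set.image_add_const_Ioo (d.γ i)]
    apply Set.image_congr
    intro z hz
    have hzJ : z ∈ d.J i := by
      have := hIcc ⟨le_of_lt hz.1, le_of_lt hz.2⟩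
      exact ⟨le_of_lt this.1, this.2⟩
    exact d.T_eq hzJ
  refine ⟨i, hIcc, ⟨show p.1 + d.γ i < p.2 + d.γ i by linarith, h0u', hv1', Or.inl (Or.inl hu'), Or.inl (Or.inl hv'), ?_⟩, himg⟩
  ext w
  simp only [Set.mem_inter_iff, Set.mem_Ioo, Set.mem_empty_iff_false, iff_false, not_and]
  rintro ⟨hw1, hw2⟩ hwK1
  have hw1' : p.1 + d.γ i < w := hw1
  have hw2' : w < p.2 + d.γ i := hw2
  have hwK : w ∈ closure (X \ orb U T) :=
    mem_K1_cases hwK1 (lt_of_le_of_lt h0u' hw1') (lt_of_lt_of_le hw2' hv1')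
  have hwX : w ∈ X := ⟨le_of_lt (lt_of_le_of_lt h0u' hw1'), lt_of_lt_of_le hw2' hv1'⟩
  -- w = T z for z in the gap
  have hz : w - d.γ i ∈ Set.Ioo p.1 p.2 := ⟨by linarith, by linarith⟩
  have hzJ : w - d.γ i ∈ d.J i := by
    have := hIcc ⟨le_of_lt hz.1, le_of_lt hz.2⟩
    exact ⟨le_of_lt this.1, this.2⟩
  have hwTi : w ∈ T '' d.J i := ⟨w - d.γ i, hzJ, by rw [d.T_eq hzJ]; ring⟩
  -- w lies in some image branch
  obtain ⟨j, hj⟩ := by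
    have hcov : w ∈ ⋃ k, T '' d.J k := by rw [d.iUnion_image_J]; exact hwX
    exact Set.mem_iUnion.1 hcov
  have hij : i = j := by
    by_contra hne
    exact (d.disj_image_J hne).le_bot ⟨hwTi, hj⟩
  subst hij
  rw [d.image_J] at hj
  have hwne : w ≠ d.β i.castSucc + d.γ i := by
    intro h
    have : w - d.γ i = d.β i.castSucc + d.γ i - d.γ i := by rw [h]
    exact hPmem (w - d.γ i) ⟨le_of_lt hz.1, le_of_lt hz.2⟩
      (by rw [this]; exact shift_mem_Pbad d i i)
  have hwIoo : w ∈ Set.Ioo (d.β i.castSucc + d.γ i) (d.β i.succ + d.γ i) :=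
    ⟨lt_of_le_of_ne hj.1 (Ne.symm hwne), hj.2⟩
  have : w - d.γ i ∈ closure (X \ orb U T) := translate_mem_K_inv d hwK hwIoo
  exact absurd (Set.mem_inter hz (Or.inl (Or.inl this)))
    (by rw [hgap]; exact fun h => h)

/-! ### Part III b : step dynamics on gaps, counting, and the main covering lemma -/

variable {T : ℝ → ℝ}

def Htrans (T : ℝ → ℝ) : Prop :=
  ∀ U V : Set ℝ, RelOpen (Set.Ico (0:ℝ) 1) U → U.Nonempty →
      RelOpen (Set.Ico (0:ℝ) 1) V → V.Nonempty →
      ∃ n : ℤ, (iterImage (Set.Ico (0:ℝ) 1) T n U ∩ V).Nonempty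

lemma relOpen_subset {A : Set ℝ} (h : RelOpen X A) : A ⊆ X := by
  obtain ⟨O, _, rfl⟩ := h; exact Set.inter_subset_left

lemma relOpen_thick {A : Set ℝ} (h : RelOpen X A) : RThick A := by
  obtain ⟨O, hO, rfl⟩ := h; exact RThick.relOpen hO

lemma relOpen_meas {A : Set ℝ} (h : RelOpen X A) : MeasurableSet A := by
  obtain ⟨O, hO, rfl⟩ := h; exact measurableSet_X.inter hO.measurableSet

lemma relOpen_Ioo {a b : ℝ} (h : Set.Ioo a b ⊆ X) : RelOpen X (Set.Ioo a b) :=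
  ⟨Set.Ioo a b, isOpen_Ioo, (Set.inter_eq_self_of_subset_right h).symm⟩

lemma iterImage_subset_orb (d : Data T) {U : Set ℝ} (hU : U ⊆ X) (n : ℤ) :
    iterImage X T n U ⊆ orb U T := by
  unfold iterImage
  split_ifs with h
  · intro y hy
    exact ⟨d.image_iter_subset_X hU _ hy, 0, n.toNat, by simpa using hy⟩
  · rintro y ⟨hyX, hy⟩
    exact ⟨hyX, (-n).toNat, 0, by simpa using hy⟩

lemma orb_dense (d : Data T) {U : Set ℝ} (hUrel : RelOpen X U) (hUne : U.Nonempty)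
    (htr : Htrans T) {c e : ℝ} (hce : c < e) (h0 : 0 ≤ c) (h1 : e ≤ 1) :
    (orb U T ∩ Set.Ioo c e).Nonempty := by
  have hsub : Set.Ioo c e ⊆ X := fun z hz =>
    ⟨le_of_lt (lt_of_le_of_lt h0 hz.1), lt_of_lt_of_le hz.2 h1⟩
  obtain ⟨n, z, hz1, hz2⟩ := htr U (Set.Ioo c e) hUrel hUne (relOpen_Ioo hsub)
    (Set.nonempty_Ioo.2 hce)
  exact ⟨z, iterImage_subset_orb d (relOpen_subset hUrel) n hz1, hz2⟩

lemma no_gap_interval (d : Data T) {U : Set ℝ} (hUrel : RelOpen X U) (hUne : U.Nonempty)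
    (htr : Htrans T) {c e : ℝ} (hce : c < e) (h0 : 0 ≤ c) (h1 : e ≤ 1) :
    ¬ (Set.Ioo c e ⊆ closure (X \ orb U T)) := by
  intro hsub
  obtain ⟨z, hzA, hzI⟩ := orb_dense d hUrel hUne htr hce h0 h1
  obtain ⟨e0, he0, hIco⟩ := rthick_orb d (relOpen_subset hUrel) (relOpen_thick hUrel) z hzA
  set e' := min e0 e with he'
  have hze' : z < e' := lt_min he0 hzI.2
  set w := (z + e') / 2 with hw
  have hw1 : z < w := by rw [hw]; linarith
  have hw2 : w < e' := by rw [hw]; linarith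
  have hwK : w ∈ closure (X \ orb U T) :=
    hsub ⟨lt_trans hzI.1 hw1, lt_of_lt_of_le hw2 (min_le_right _ _)⟩
  obtain ⟨f, hfI, hfF⟩ := mem_closure_iff.1 hwK (Set.Ioo z e') isOpen_Ioo ⟨hw1, hw2⟩
  have : f ∈ orb U T := hIco ⟨le_of_lt hfI.1, lt_of_lt_of_le hfI.2 (min_le_left _ _)⟩
  exact hfF.2 this

/-- one gap-step of the induced dynamics -/
def Step (d : Data T) (U : Set ℝ) (p q : ℝ × ℝ) : Prop :=
  IsGap T U p ∧ Set.Icc p.1 p.2 ∩ Pbad d = ∅ ∧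
    ∃ i : Fin d.r, Set.Icc p.1 p.2 ⊆ Set.Ioo (d.β i.castSucc) (d.β i.succ) ∧
      q = (p.1 + d.γ i, p.2 + d.γ i)

lemma branch_unique (d : Data T) {u : ℝ} {i j : Fin d.r}
    (hi : u ∈ Set.Ioo (d.β i.castSucc) (d.β i.succ))
    (hj : u ∈ Set.Ioo (d.β j.castSucc) (d.β j.succ)) : i = j := by
  by_contra hne
  exact (d.disj_J hne).le_bot ⟨⟨le_of_lt hi.1, hi.2⟩, ⟨le_of_lt hj.1, hj.2⟩⟩

lemma step_props (d : Data T) {U : Set ℝ} {p q : ℝ × ℝ} (h : Step d U p q) :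
    IsGap T U q ∧ T '' Set.Ioo p.1 p.2 = Set.Ioo q.1 q.2 := by
  obtain ⟨hgap, hP, i, hIcc, rfl⟩ := h
  obtain ⟨i', hIcc', hgap', himg'⟩ := gap_step d hgap hP
  have : i' = i := branch_unique d (hIcc' ⟨le_rfl, le_of_lt hgap.1⟩)
    (hIcc ⟨le_rfl, le_of_lt hgap.1⟩)
  subst this
  exact ⟨hgap', himg'⟩

lemma step_fun (d : Data T) {U : Set ℝ} {p q q' : ℝ × ℝ} (h : Step d U p q)
    (h' : Step d U p q') : q = q' := by
  obtain ⟨hgap, _, i, hIcc, rfl⟩ := h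
  obtain ⟨_, _, j, hIcc', rfl⟩ := h'
  have : i = j := branch_unique d (hIcc ⟨le_rfl, le_of_lt hgap.1⟩)
    (hIcc' ⟨le_rfl, le_of_lt hgap.1⟩)
  subst this; rfl

lemma step_inj (d : Data T) {U : Set ℝ} {p p' q : ℝ × ℝ} (h : Step d U p q)
    (h' : Step d U p' q) : p = p' := by
  have h1 := step_props d h
  have h2 := step_props d h'
  have himg : T '' Set.Ioo p.1 p.2 = T '' Set.Ioo p'.1 p'.2 := by rw [h1.2, h2.2]
  have hIoo : Set.Ioo p.1 p.2 = Set.Ioo p'.1 p'.2 :=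
    (d.injOn.image_eq_image_iff (gap_Ioo_subset_X h.1) (gap_Ioo_subset_X h'.1)).1 himg
  apply gap_eq_of_inter h.1 h'.1
  rw [← hIoo, Set.inter_self]
  exact Set.nonempty_Ioo.2 h.1.1

lemma step_len {d : Data T} {U : Set ℝ} {p q : ℝ × ℝ} (h : Step d U p q) :
    q.2 - q.1 = p.2 - p.1 := by
  obtain ⟨_, _, i, _, rfl⟩ := h; simp

def StepN (d : Data T) (U : Set ℝ) : ℕ → ℝ × ℝ → ℝ × ℝ → Prop
  | 0, p, q => p = q
  | n+1, p, q => ∃ w, Step d U p w ∧ StepN d U n w q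

lemma stepN_fun (d : Data T) {U : Set ℝ} {n : ℕ} {p q q' : ℝ × ℝ}
    (h : StepN d U n p q) (h' : StepN d U n p q') : q = q' := by
  induction n generalizing p with
  | zero => rw [← h, ← h']
  | succ n ih =>
      obtain ⟨w, hw, hN⟩ := h
      obtain ⟨w', hw', hN'⟩ := h'
      have : w = w' := step_fun d hw hw'
      subst this
      exact ih hN hN'

lemma stepN_inj (d : Data T) {U : Set ℝ} {n : ℕ} {p p' q : ℝ × ℝ}
    (h : StepN d U n p q) (h' : StepN d U n p' q) : p = p' := by
  induction n generalizing p p' with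
  | zero => rw [h, ← h']
  | succ n ih =>
      obtain ⟨w, hw, hN⟩ := h
      obtain ⟨w', hw', hN'⟩ := h'
      have : w = w' := ih hN hN'
      subst this
      exact step_inj d hw hw'

lemma stepN_gap (d : Data T) {U : Set ℝ} {n : ℕ} {p q : ℝ × ℝ}
    (h : StepN d U n p q) (hp : IsGap T U p) : IsGap T U q := by
  induction n generalizing p with
  | zero => rw [← h]; exact hp
  | succ n ih =>
      obtain ⟨w, hw, hN⟩ := h
      exact ih hN (step_props d hw).1

lemma stepN_len (d : Data T) {U : Set ℝ} {n : ℕ} {p q : ℝ × ℝ}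
    (h : StepN d U n p q) : q.2 - q.1 = p.2 - p.1 := by
  induction n generalizing p with
  | zero => rw [← h]
  | succ n ih =>
      obtain ⟨w, hw, hN⟩ := h
      rw [ih hN, step_len hw]

lemma stepN_trans (d : Data T) {U : Set ℝ} {a b : ℕ} {p w q : ℝ × ℝ}
    (h1 : StepN d U a p w) (h2 : StepN d U b w q) : StepN d U (a + b) p q := by
  induction a generalizing p with
  | zero => rw [Nat.zero_add]; rw [show p = w from h1]; exact h2
  | succ a ih =>
      obtain ⟨w', hw', hN⟩ := h1
      exact (by rw [Nat.succ_add]; exact ⟨w', hw', ih hN⟩)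

lemma stepN_split (d : Data T) {U : Set ℝ} {n k : ℕ} (hk : k ≤ n) {p q : ℝ × ℝ}
    (h : StepN d U n p q) : ∃ w, StepN d U k p w ∧ StepN d U (n - k) w q := by
  induction k generalizing p n with
  | zero => exact ⟨p, rfl, by simpa using h⟩
  | succ k ih =>
      cases n with
      | zero => omega
      | succ n =>
          obtain ⟨w, hw, hN⟩ := h
          obtain ⟨w', h1, h2⟩ := ih (Nat.succ_le_succ_iff.1 hk) hN
          exact ⟨w', ⟨w, hw, h1⟩, by rwa [Nat.succ_sub_succ]⟩

lemma stepN_image (d : Data T) {U : Set ℝ} {n : ℕ} {p q : ℝ × ℝ}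
    (h : StepN d U n p q) : T^[n] '' Set.Ioo p.1 p.2 = Set.Ioo q.1 q.2 := by
  induction n generalizing p with
  | zero => rw [← h]; simp
  | succ n ih =>
      obtain ⟨w, hw, hN⟩ := h
      rw [Function.iterate_succ, Set.image_comp, (step_props d hw).2, ih hN]

/-! ### Part III c : no cycles, termination, finiteness of gaps -/

variable {T : ℝ → ℝ}

lemma no_cycle (d : Data T) {U : Set ℝ} (hUrel : RelOpen X U) (hUne : U.Nonempty)
    (htr : Htrans T) (hinf : ¬ (closure (X \ orb U T) ∩ X).Finite)
    {p : ℝ × ℝ} {n : ℕ} (hn : 0 < n) (hcyc : StepN d U n p p) : False := by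
  classical
  set R' : Set (ℝ × ℝ) := {w | ∃ k, k < n ∧ StepN d U k p w} with hR'
  have hpgap : IsGap T U p := by
    cases n with
    | zero => omega
    | succ n => obtain ⟨w, hw, _⟩ := hcyc; exact hw.1
  have hpR : p ∈ R' := ⟨0, hn, rfl⟩
  have hfin : R'.Finite := by
    have : R' ⊆ ⋃ k ∈ Finset.range n, {w | StepN d U k p w} := by
      rintro w ⟨k, hk, hw⟩
      exact Set.mem_biUnion (Finset.mem_range.2 hk) hw
    have hss : ∀ k : ℕ, ({w : ℝ × ℝ | StepN d U k p w}).Finite :=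
      fun k => Set.Subsingleton.finite (fun a ha b hb => stepN_fun d ha hb)
    exact Set.Finite.subset (Set.Finite.biUnion (Finset.range n).finite_toSet
      (fun k _ => hss k)) this
  have hgapR : ∀ w ∈ R', IsGap T U w := by
    rintro w ⟨k, _, hw⟩
    exact stepN_gap d hw hpgap
  have hpred : ∀ w ∈ R', ∃ w₀ ∈ R', Step d U w₀ w := by
    rintro w ⟨k, hk, hw⟩
    cases k with
    | zero =>
        obtain ⟨w₀, h1, h2⟩ := stepN_split d (show n - 1 ≤ n by omega) hcyc
        have h2' : StepN d U 1 w₀ p := by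
          have : n - (n - 1) = 1 := by omega
          rwa [this] at h2
        obtain ⟨w₁, hw₁, he⟩ := h2'
        have he' : w₁ = p := he
        have hw' : p = w := hw
        rw [← hw']
        exact ⟨w₀, ⟨n - 1, by omega, h1⟩, by rwa [he'] at hw₁⟩
    | succ k =>
        obtain ⟨w₀, h1, h2⟩ := stepN_split d (show k ≤ k + 1 by omega) hw
        have h2' : StepN d U 1 w₀ w := by
          have : k + 1 - k = 1 := by omega
          rwa [this] at h2
        obtain ⟨w₁, hw₁, he⟩ := h2'
        have he' : w₁ = w := he
        exact ⟨w₀, ⟨k, by omega, h1⟩, by rwa [he'] at hw₁⟩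
  have hsucc : ∀ w ∈ R', ∃ w' ∈ R', Step d U w w' := by
    rintro w ⟨k, hk, hw⟩
    obtain ⟨w'', h1, h2⟩ := stepN_split d (le_of_lt hk) hcyc
    have hww : w'' = w := stepN_fun d h1 hw
    subst hww
    have hpos : 0 < n - k := by omega
    obtain ⟨w', hw', hN⟩ : ∃ w', Step d U w'' w' ∧ StepN d U (n - k - 1) w' p := by
      cases hnk : n - k with
      | zero => omega
      | succ m => rw [hnk] at h2; obtain ⟨w', h3, h4⟩ := h2; exact ⟨w', h3, by simpa using h4⟩
    refine ⟨w', ?_, hw'⟩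
    by_cases hcase : k + 1 < n
    · exact ⟨k + 1, hcase, stepN_trans d hw ⟨w', hw', rfl⟩⟩
    · have hk1 : k + 1 = n := by omega
      have : StepN d U n p w' := by
        rw [← hk1]
        exact stepN_trans d hw ⟨w', hw', rfl⟩
      have : w' = p := stepN_fun d this hcyc
      rw [this]; exact hpR
  set B₀ : Set ℝ := ⋃ w ∈ R', Set.Ioo w.1 w.2 with hB₀
  have hBX : B₀ ⊆ X := by
    rintro y hy
    obtain ⟨w, hw, hy⟩ := Set.mem_iUnion₂.1 hy
    exact gap_Ioo_subset_X (hgapR w hw) hy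
  have himg : T '' B₀ = B₀ := by
    apply Subset.antisymm
    · rw [Set.image_iUnion₂]
      refine Set.iUnion₂_subset (fun w hw => ?_)
      obtain ⟨w', hw', hstep⟩ := hsucc w hw
      rw [(step_props d hstep).2]
      exact fun y hy => Set.mem_iUnion₂.2 ⟨w', hw', hy⟩
    · intro y hy
      obtain ⟨w, hw, hy⟩ := Set.mem_iUnion₂.1 hy
      obtain ⟨w₀, hw₀, hstep⟩ := hpred w hw
      rw [← (step_props d hstep).2] at hy
      obtain ⟨z, hz, rfl⟩ := hy
      exact Set.mem_image_of_mem T (Set.mem_iUnion₂.2 ⟨w₀, hw₀, hz⟩)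
  have hpre : ∀ y ∈ X, T y ∈ B₀ → y ∈ B₀ := by
    intro y hyX hy
    obtain ⟨w, hw, hyw⟩ := Set.mem_iUnion₂.1 hy
    obtain ⟨w₀, hw₀, hstep⟩ := hpred w hw
    rw [← (step_props d hstep).2] at hyw
    obtain ⟨z, hz, hzy⟩ := hyw
    have : z = y := d.injOn (gap_Ioo_subset_X (hgapR w₀ hw₀) hz) hyX hzy
    rw [← this]
    exact Set.mem_iUnion₂.2 ⟨w₀, hw₀, hz⟩
  have hiter_img : ∀ m : ℕ, T^[m] '' B₀ = B₀ := by
    intro m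
    induction m with
    | zero => simp
    | succ m ih => rw [Function.iterate_succ', Set.image_comp, ih, himg]
  have hiter_pre : ∀ m : ℕ, ∀ y ∈ X, T^[m] y ∈ B₀ → y ∈ B₀ := by
    intro m
    induction m with
    | zero => intro y _ h; simpa using h
    | succ m ih =>
        intro y hyX h
        rw [Function.iterate_succ_apply] at h
        exact hpre y hyX (ih (T y) (d.mapsTo hyX) h)
  have hiterIm : ∀ nz : ℤ, iterImage X T nz (Set.Ioo p.1 p.2) ⊆ B₀ := by
    intro nz
    unfold iterImage
    split_ifs with h
    · intro y hy
      rw [← hiter_img nz.toNat]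
      exact Set.image_mono (f := T^[nz.toNat]) (fun y hy => Set.mem_iUnion₂.2 ⟨p, hpR, hy⟩) hy
    · rintro y ⟨hyX, hy⟩
      exact hiter_pre _ y hyX (Set.mem_iUnion₂.2 ⟨p, hpR, hy⟩)
  have hclos : closure B₀ = ⋃ w ∈ R', Set.Icc w.1 w.2 := by
    rw [hB₀, hfin.closure_biUnion]
    exact Set.iUnion₂_congr (fun w hw => closure_Ioo (ne_of_lt (hgapR w hw).1))
  by_cases hcase : ∃ x, x ∈ X ∧ x ∉ closure B₀
  · obtain ⟨x₀, hx₀X, hx₀⟩ := hcase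
    have hVrel : RelOpen X (X ∩ (closure B₀)ᶜ) :=
      ⟨(closure B₀)ᶜ, isClosed_closure.isOpen_compl, rfl⟩
    obtain ⟨nz, z, hz1, hz2⟩ := htr (Set.Ioo p.1 p.2) (X ∩ (closure B₀)ᶜ)
      (relOpen_Ioo (gap_Ioo_subset_X hpgap)) (Set.nonempty_Ioo.2 hpgap.1)
      hVrel ⟨x₀, hx₀X, hx₀⟩
    exact hz2.2 (subset_closure (hiterIm nz hz1))
  · push_neg at hcase
    apply hinf
    have hsub : closure (X \ orb U T) ∩ X ⊆ ⋃ w ∈ R', ({w.1} ∪ {w.2} : Set ℝ) := by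
      rintro x ⟨hxK, hxX⟩
      have hx : x ∈ closure B₀ := hcase x hxX
      rw [hclos] at hx
      obtain ⟨w, hw, hxw⟩ := Set.mem_iUnion₂.1 hx
      have hnotIoo : x ∉ Set.Ioo w.1 w.2 := by
        intro hmem
        have : x ∈ Set.Ioo w.1 w.2 ∩ K1 T U := ⟨hmem, Or.inl (Or.inl hxK)⟩
        rw [(hgapR w hw).2.2.2.2.2] at this
        exact this
      refine Set.mem_iUnion₂.2 ⟨w, hw, ?_⟩
      rcases eq_or_lt_of_le hxw.1 with h | h
      · exact Or.inl (by rw [← h]; rfl)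
      · rcases eq_or_lt_of_le hxw.2 with h2 | h2
        · exact Or.inr (by rw [h2]; rfl)
        · exact absurd ⟨h, h2⟩ hnotIoo
    exact Set.Finite.subset (hfin.biUnion
      (fun w _ => (Set.finite_singleton _).union (Set.finite_singleton _))) hsub

lemma gaps_of_len_finite {U : Set ℝ} {l : ℝ} (hl : 0 < l) :
    {p : ℝ × ℝ | IsGap T U p ∧ p.2 - p.1 = l}.Finite := by
  set S := {p : ℝ × ℝ | IsGap T U p ∧ p.2 - p.1 = l} with hS
  have hinj : Set.InjOn Prod.fst S := by
    intro p hp q hq h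
    exact gap_eq_of_left hp.1 hq.1 h
  have hsep : ∀ p ∈ S, ∀ q ∈ S, p ≠ q → l ≤ |p.1 - q.1| := by
    have key : ∀ p ∈ S, ∀ q ∈ S, p.1 < q.1 → p.1 + l ≤ q.1 := by
      rintro p hp q hq hlt
      by_contra h
      push_neg at h
      have hp2 : p.2 = p.1 + l := by have := hp.2; linarith
      have hq2 : q.2 = q.1 + l := by have := hq.2; linarith
      have : p = q := by
        apply gap_eq_of_inter hp.1 hq.1
        refine ⟨(q.1 + min p.2 q.2) / 2, ⟨?_, ?_⟩, ⟨?_, ?_⟩⟩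
        · have : q.1 < min p.2 q.2 := lt_min (by rw [hp2]; linarith) (by rw [hq2]; linarith)
          linarith
        · have h1 : min p.2 q.2 ≤ p.2 := min_le_left _ _
          have : q.1 < p.2 := by rw [hp2]; linarith
          have : q.1 < min p.2 q.2 := lt_min ‹q.1 < p.2› (by rw [hq2]; linarith)
          linarith
        · have : q.1 < min p.2 q.2 := lt_min (by rw [hp2]; linarith) (by rw [hq2]; linarith)
          linarith
        · have h1 : min p.2 q.2 ≤ q.2 := min_le_right _ _
          have : q.1 < min p.2 q.2 := lt_min (by rw [hp2]; linarith) (by rw [hq2]; linarith)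
          linarith
      rw [this] at hlt
      exact lt_irrefl _ hlt
    intro p hp q hq hne
    rcases lt_trichotomy p.1 q.1 with h | h | h
    · have := key p hp q hq h
      rw [abs_sub_comm]
      rw [abs_of_nonneg (by linarith)]
      linarith
    · exact absurd (hinj hp hq h) hne
    · have := key q hq p hp h
      rw [abs_of_nonneg (by linarith)]
      linarith
  have hffin : ((fun x : ℝ => ⌊x / l⌋) '' (Prod.fst '' S)).Finite := by
    apply Set.Finite.subset (Set.finite_Icc (0 : ℤ) ⌊1 / l⌋)
    rintro z ⟨x, ⟨p, hp, rfl⟩, rfl⟩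
    have h0 : 0 ≤ p.1 := hp.1.2.1
    have h1 : p.1 ≤ 1 := le_trans (le_of_lt hp.1.1) hp.1.2.2.1
    constructor
    · exact Int.floor_nonneg.2 (div_nonneg h0 (le_of_lt hl))
    · exact Int.floor_le_floor ((div_le_div_iff_of_pos_right hl).2 h1)
  have hfstinj : Set.InjOn (fun x : ℝ => ⌊x / l⌋) (Prod.fst '' S) := by
    rintro a ⟨p, hp, rfl⟩ b ⟨q, hq, rfl⟩ h
    by_contra hne
    have hpq : p ≠ q := fun he => hne (by rw [he])
    have hsep' := hsep p hp q hq hpq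
    have habs : |p.1 / l - q.1 / l| < 1 := Int.abs_sub_lt_one_of_floor_eq_floor h
    rw [div_sub_div_same, abs_div, abs_of_pos hl, div_lt_one hl] at habs
    exact absurd habs (not_lt.2 hsep')
  exact Set.Finite.of_finite_image
    (Set.Finite.of_finite_image hffin hfstinj) hinj

lemma reach_bad (d : Data T) {U : Set ℝ} (hUrel : RelOpen X U) (hUne : U.Nonempty)
    (htr : Htrans T) (hinf : ¬ (closure (X \ orb U T) ∩ X).Finite)
    {p : ℝ × ℝ} (hp : IsGap T U p) :
    ∃ k q, StepN d U k p q ∧ (Set.Icc q.1 q.2 ∩ Pbad d).Nonempty := by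
  by_contra h
  push_neg at h
  have hno : ∀ k q, StepN d U k p q → Set.Icc q.1 q.2 ∩ Pbad d = ∅ := by
    intro k q hk
    exact h k q hk
  have hQ : ∀ k : ℕ, ∃ q, StepN d U k p q ∧ IsGap T U q := by
    intro k
    induction k with
    | zero => exact ⟨p, rfl, hp⟩
    | succ k ih =>
        obtain ⟨q, hq, hqgap⟩ := ih
        obtain ⟨i, hIcc, hgap', _⟩ := gap_step d hqgap (hno k q hq)
        refine ⟨(q.1 + d.γ i, q.2 + d.γ i), ?_, hgap'⟩
        exact stepN_trans d hq ⟨(q.1 + d.γ i, q.2 + d.γ i), ⟨hqgap, hno k q hq, i, hIcc, rfl⟩, rfl⟩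
  choose Q hQ1 hQ2 using hQ
  have hdist : ∀ k k' : ℕ, k < k' → Q k ≠ Q k' := by
    intro k k' hkk' he
    obtain ⟨w, h1, h2⟩ := stepN_split d (le_of_lt hkk') (hQ1 k')
    have hw : w = Q k := stepN_fun d h1 (hQ1 k)
    subst hw
    rw [← he] at h2
    exact no_cycle d hUrel hUne htr hinf (by omega : 0 < k' - k) h2
  have hQinj : Function.Injective Q := by
    intro k k' h
    rcases lt_trichotomy k k' with hlt | he | hlt
    · exact absurd h (hdist k k' hlt)
    · exact he
    · exact absurd h.symm (hdist k' k hlt)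
  have hl : 0 < p.2 - p.1 := by have := hp.1; linarith
  have hmem : ∀ k, Q k ∈ {q : ℝ × ℝ | IsGap T U q ∧ q.2 - q.1 = p.2 - p.1} :=
    fun k => ⟨hQ2 k, stepN_len d (hQ1 k)⟩
  exact (Set.infinite_of_injective_forall_mem hQinj hmem) (gaps_of_len_finite hl)

lemma gaps_finite (d : Data T) {U : Set ℝ} (hUrel : RelOpen X U) (hUne : U.Nonempty)
    (htr : Htrans T) (hinf : ¬ (closure (X \ orb U T) ∩ X).Finite) :
    {p : ℝ × ℝ | IsGap T U p}.Finite := by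
  classical
  set Bad := {q : ℝ × ℝ | IsGap T U q ∧ (Set.Icc q.1 q.2 ∩ Pbad d).Nonempty} with hBad
  have hBadfin : Bad.Finite := by
    have hsub : Bad ⊆ ⋃ x ∈ Pbad d, {q : ℝ × ℝ | IsGap T U q ∧ x ∈ Set.Icc q.1 q.2} := by
      rintro q ⟨hq, x, hx1, hx2⟩
      exact Set.mem_biUnion hx2 ⟨hq, hx1⟩
    refine Set.Finite.subset ((Pbad_finite d).biUnion (fun x _ => ?_)) hsub
    have : {q : ℝ × ℝ | IsGap T U q ∧ x ∈ Set.Icc q.1 q.2} ⊆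
        {q : ℝ × ℝ | IsGap T U q ∧ x ∈ Set.Ioo q.1 q.2} ∪
        ({q : ℝ × ℝ | IsGap T U q ∧ q.1 = x} ∪ {q : ℝ × ℝ | IsGap T U q ∧ q.2 = x}) := by
      rintro q ⟨hq, hx⟩
      rcases eq_or_lt_of_le hx.1 with h | h
      · exact Or.inr (Or.inl ⟨hq, h⟩)
      · rcases eq_or_lt_of_le hx.2 with h2 | h2
        · exact Or.inr (Or.inr ⟨hq, h2.symm⟩)
        · exact Or.inl ⟨hq, h, h2⟩
    refine Set.Finite.subset (Set.Finite.union ?_ (Set.Finite.union ?_ ?_)) this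
    · apply Set.Subsingleton.finite
      intro a ha b hb
      exact gap_eq_of_inter ha.1 hb.1 ⟨x, ha.2, hb.2⟩
    · apply Set.Subsingleton.finite
      intro a ha b hb
      exact gap_eq_of_left ha.1 hb.1 (by rw [ha.2, hb.2])
    · apply Set.Subsingleton.finite
      intro a ha b hb
      exact gap_eq_of_right ha.1 hb.1 (by rw [ha.2, hb.2])
  have hsub : {p : ℝ × ℝ | IsGap T U p} ⊆
      ⋃ b ∈ Bad, {p : ℝ × ℝ | IsGap T U p ∧ ∃ k, StepN d U k p b} := by
    intro p hp
    obtain ⟨k, q, hkq, hqbad⟩ := reach_bad d hUrel hUne htr hinf hp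
    exact Set.mem_biUnion (⟨stepN_gap d hkq hp, hqbad⟩ : q ∈ Bad) ⟨hp, k, hkq⟩
  refine Set.Finite.subset (hBadfin.biUnion (fun b hb => ?_)) hsub
  have hl : 0 < b.2 - b.1 := by have := hb.1.1; linarith
  refine Set.Finite.subset (gaps_of_len_finite (T := T) (U := U) hl) ?_
  rintro p ⟨hp, k, hk⟩
  exact ⟨hp, (stepN_len d hk).symm⟩

/-! ### Part IV : the orbit of a relatively open set has full measure -/

variable {T : ℝ → ℝ}

lemma K_inter_X_finite (d : Data T) {U : Set ℝ} (hUrel : RelOpen X U) (hUne : U.Nonempty)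
    (htr : Htrans T) : (closure (X \ orb U T) ∩ X).Finite := by
  by_contra hinf
  apply hinf
  have hgfin := gaps_finite d hUrel hUne htr hinf
  set G : Set ℝ := ⋃ g ∈ {p : ℝ × ℝ | IsGap T U p}, Set.Ioo g.1 g.2 with hG
  have hclosG : closure G = ⋃ g ∈ {p : ℝ × ℝ | IsGap T U p}, Set.Icc g.1 g.2 := by
    rw [hG, hgfin.closure_biUnion]
    exact Set.iUnion₂_congr (fun g hg => closure_Ioo (ne_of_lt hg.1))
  have hmain : closure (X \ orb U T) ∩ Set.Ioo 0 1 ⊆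
      ⋃ g ∈ {p : ℝ × ℝ | IsGap T U p}, ({g.1} ∪ {g.2} : Set ℝ) := by
    rintro x ⟨hxK, hxI⟩
    have hxG : x ∈ closure G := by
      by_contra hxG
      have hopen : IsOpen (closure G)ᶜ := isClosed_closure.isOpen_compl
      obtain ⟨ε, hε, hball⟩ := Metric.isOpen_iff.1 hopen x hxG
      set δ := min ε (min x (1 - x)) with hδ
      have hδ0 : 0 < δ := lt_min hε (lt_min hxI.1 (by linarith [hxI.2]))
      have hδx : δ ≤ x := le_trans (min_le_right _ _) (min_le_left _ _)
      have hδ1 : δ ≤ 1 - x := le_trans (min_le_right _ _) (min_le_right _ _)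
      have hsubK : Set.Ioo (x - δ) (x + δ) ⊆ closure (X \ orb U T) := by
        intro y hy
        by_contra hyK
        have hyI : y ∈ Set.Ioo (0:ℝ) 1 := ⟨by linarith [hy.1], by linarith [hy.2]⟩
        obtain ⟨g, hg, hyg⟩ := exists_gap hyI hyK
        have hyG : y ∈ G := Set.mem_iUnion₂.2 ⟨g, hg, hyg⟩
        have : y ∈ (closure G)ᶜ := by
          apply hball
          rw [Real.ball_eq_Ioo]
          exact ⟨by linarith [hy.1, min_le_left ε (min x (1-x))],
                 by linarith [hy.2, min_le_left ε (min x (1-x))]⟩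
        exact this (subset_closure hyG)
      exact no_gap_interval d hUrel hUne htr
        (by linarith : x - δ < x + δ) (by linarith) (by linarith) hsubK
    rw [hclosG] at hxG
    obtain ⟨g, hg, hxg⟩ := Set.mem_iUnion₂.1 hxG
    have hnotIoo : x ∉ Set.Ioo g.1 g.2 := by
      intro hmem
      have : x ∈ Set.Ioo g.1 g.2 ∩ K1 T U := ⟨hmem, Or.inl (Or.inl hxK)⟩
      rw [hg.2.2.2.2.2] at this
      exact this
    refine Set.mem_iUnion₂.2 ⟨g, hg, ?_⟩
    rcases eq_or_lt_of_le hxg.1 with h | h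
    · exact Or.inl (by rw [← h]; rfl)
    · rcases eq_or_lt_of_le hxg.2 with h2 | h2
      · exact Or.inr (by rw [h2]; rfl)
      · exact absurd ⟨h, h2⟩ hnotIoo
  have hfin2 : (closure (X \ orb U T) ∩ Set.Ioo 0 1).Finite :=
    Set.Finite.subset (hgfin.biUnion
      (fun g _ => (Set.finite_singleton _).union (Set.finite_singleton _))) hmain
  have : closure (X \ orb U T) ∩ X ⊆ (closure (X \ orb U T) ∩ Set.Ioo 0 1) ∪ {0} := by
    rintro x ⟨hxK, hxX⟩
    rcases eq_or_lt_of_le hxX.1 with h | h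
    · exact Or.inr (by rw [← h]; rfl)
    · exact Or.inl ⟨hxK, h, hxX.2⟩
  exact Set.Finite.subset (hfin2.union (Set.finite_singleton _)) this

/-- MAIN COVERING LEMMA: the complement of the full orbit of a relatively
open nonempty set is Lebesgue-null. -/
lemma orb_conull (d : Data T) {U : Set ℝ} (hUrel : RelOpen X U) (hUne : U.Nonempty)
    (htr : Htrans T) : volume (X \ orb U T) = 0 := by
  have hfin := K_inter_X_finite d hUrel hUne htr
  have hsub : X \ orb U T ⊆ closure (X \ orb U T) ∩ X :=
    fun x hx => ⟨subset_closure hx, hx.1⟩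
  exact measure_mono_null hsub ((hfin).measure_zero volume)

/-! ### Part V : measure-theoretic lemmas -/

variable {T : ℝ → ℝ}

lemma m'_apply (s : Set ℝ) : (volume.restrict X) s = volume (s ∩ X) :=
  Measure.restrict_apply' measurableSet_X

lemma m'_compl_X : (volume.restrict X) Xᶜ = 0 := by
  rw [m'_apply, Set.compl_inter_self, measure_empty]

lemma m'_univ : (volume.restrict X) Set.univ = 1 := by
  rw [m'_apply, Set.univ_inter]
  show volume (Set.Ico (0:ℝ) 1) = 1
  rw [Real.volume_Ico]
  norm_num

instance : IsFiniteMeasure (volume.restrict X) :=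
  ⟨by rw [m'_univ]; exact ENNReal.one_lt_top⟩

lemma Data.m'_preserve (d : Data T) {A : Set ℝ} (hA : MeasurableSet A) :
    (volume.restrict X) (T ⁻¹' A) = (volume.restrict X) A := by
  rw [m'_apply, m'_apply, d.preserve hA]

lemma Data.m'_preserve_iter (d : Data T) (p : ℕ) {A : Set ℝ} (hA : MeasurableSet A) :
    (volume.restrict X) (T^[p] ⁻¹' A) = (volume.restrict X) A := by
  induction p with
  | zero => simp
  | succ n ih =>
      have h1 : T^[n+1] ⁻¹' A = T ⁻¹' (T^[n] ⁻¹' A) := by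
        rw [Function.iterate_succ, Set.preimage_comp]
      rw [h1, d.m'_preserve ((d.meas.iterate n) hA), ih]

lemma Data.m'_preserve_null (d : Data T) (p : ℕ) {A : Set ℝ}
    (hA : (volume.restrict X) A = 0) : (volume.restrict X) (T^[p] ⁻¹' A) = 0 := by
  obtain ⟨A', hAA', hA'm, hA'0⟩ := exists_measurable_superset_of_null hA
  exact le_antisymm (le_trans (measure_mono (Set.preimage_mono hAA'))
    (le_of_eq ((d.m'_preserve_iter p hA'm).trans hA'0))) zero_le

lemma Data.map_T_m' (d : Data T) :
    Measure.map T (volume.restrict X) = volume.restrict X := by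
  ext A hA
  rw [Measure.map_apply d.meas hA, d.m'_preserve hA]

lemma Data.null_image_iter (d : Data T) (q : ℕ) {N : Set ℝ} (hN : N ⊆ X)
    (h0 : volume N = 0) : volume (T^[q] '' N) = 0 := by
  induction q with
  | zero => simpa using h0
  | succ n ih =>
      rw [Function.iterate_succ', Set.image_comp]
      exact d.null_image (d.image_iter_subset_X hN n) ih

lemma Data.preimage_image_inter (d : Data T) {S : Set ℝ} (hS : S ⊆ X) :
    T ⁻¹' (T '' S) ∩ X = S := by
  apply Subset.antisymm
  · rintro x ⟨hx, hxX⟩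
    obtain ⟨y, hy, hxy⟩ := hx
    rwa [d.injOn hxX (hS hy) hxy.symm]
  · intro x hx
    exact ⟨Set.mem_image_of_mem T hx, hS hx⟩

lemma mu_preimage_null (μ : Measure ℝ)
    (hinv : ∀ A : Set ℝ, MeasurableSet A → μ (T ⁻¹' A) = μ A)
    (μXc : μ Xᶜ = 0) {B : Set ℝ} (hBm : MeasurableSet B) {S : Set ℝ} (hS : S ⊆ X)
    (hpre : T ⁻¹' B ∩ X = S) (hSB : S ⊆ T ⁻¹' B) : μ B = μ S := by
  rw [← hinv B hBm]
  apply le_antisymm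
  · calc μ (T ⁻¹' B) ≤ μ ((T ⁻¹' B ∩ X) ∪ Xᶜ) := by
          apply measure_mono
          intro x hx
          by_cases hX : x ∈ X
          · exact Or.inl ⟨hx, hX⟩
          · exact Or.inr hX
      _ ≤ μ (T ⁻¹' B ∩ X) + μ Xᶜ := measure_union_le _ _
      _ = μ S := by rw [hpre, μXc, add_zero]
  · exact measure_mono hSB

lemma Data.mu_image (d : Data T) (μ : Measure ℝ)
    (hinv : ∀ A : Set ℝ, MeasurableSet A → μ (T ⁻¹' A) = μ A)
    (μXc : μ Xᶜ = 0) {S : Set ℝ} (hS : S ⊆ X) (hSm : MeasurableSet S) :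
    μ (T '' S) = μ S :=
  mu_preimage_null μ hinv μXc (d.measurable_image hS hSm) hS
    (d.preimage_image_inter hS) (Set.subset_preimage_image T S)

/-- invariance of the Radon–Nikodym derivative -/
lemma Data.rnDeriv_T_inv (d : Data T) (μ : Measure ℝ) [IsFiniteMeasure μ]
    (hac : μ ≪ volume.restrict X)
    (hinv : ∀ A : Set ℝ, MeasurableSet A → μ (T ⁻¹' A) = μ A) :
    (fun x => μ.rnDeriv (volume.restrict X) (T x)) =ᵐ[volume.restrict X]
      μ.rnDeriv (volume.restrict X) := by
  set m' := volume.restrict X with hm'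
  set ρ := μ.rnDeriv m' with hρ
  have hρm : Measurable ρ := Measure.measurable_rnDeriv μ m'
  have hμXc : μ Xᶜ = 0 := hac m'_compl_X
  apply ae_eq_of_forall_setLIntegral_eq_of_sigmaFinite (hρm.comp d.meas) hρm
  intro s hs _
  set s' := s ∩ X with hs'def
  have hs'm : MeasurableSet s' := hs.inter measurableSet_X
  have hs'X : s' ⊆ X := Set.inter_subset_right
  have hss' : s =ᵐ[m'] s' := by
    rw [ae_eq_set]
    constructor
    · refine measure_mono_null (fun x hx => ?_) m'_compl_X
      exact fun hX => hx.2 ⟨hx.1, hX⟩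
    · rw [Set.diff_eq_empty.2 Set.inter_subset_left, measure_empty]
  set B := T '' s' with hB
  have hBm : MeasurableSet B := d.measurable_image hs'X hs'm
  have hpre : T ⁻¹' B ∩ X = s' := d.preimage_image_inter hs'X
  have hpreae : (T ⁻¹' B) =ᵐ[m'] s' := by
    rw [ae_eq_set]
    constructor
    · refine measure_mono_null (fun x hx => ?_) m'_compl_X
      intro hX
      exact hx.2 (by rw [← hpre]; exact ⟨hx.1, hX⟩)
    · rw [Set.diff_eq_empty.2 (by rw [← hpre]; exact Set.inter_subset_left), measure_empty]
  calc ∫⁻ x in s, ρ (T x) ∂m'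
      = ∫⁻ x in s', ρ (T x) ∂m' := setLIntegral_congr hss'
    _ = ∫⁻ x in T ⁻¹' B, ρ (T x) ∂m' := (setLIntegral_congr hpreae).symm
    _ = ∫⁻ x, (T ⁻¹' B).indicator (fun x => ρ (T x)) x ∂m' :=
        (lintegral_indicator (d.meas hBm) _).symm
    _ = ∫⁻ x, B.indicator ρ (T x) ∂m' := by
        apply lintegral_congr
        intro x
        by_cases h : T x ∈ B
        · simp [Set.indicator_of_mem h, Set.indicator_of_mem (Set.mem_preimage.2 h)]
        · simp [Set.indicator_of_notMem h,
            Set.indicator_of_notMem (fun hh => h (Set.mem_preimage.1 hh))]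
    _ = ∫⁻ y, B.indicator ρ y ∂(Measure.map T m') :=
        (lintegral_map (hρm.indicator hBm) d.meas).symm
    _ = ∫⁻ y, B.indicator ρ y ∂m' := by rw [d.map_T_m']
    _ = ∫⁻ y in B, ρ y ∂m' := lintegral_indicator hBm _
    _ = μ B := Measure.setLIntegral_rnDeriv' hac hBm
    _ = μ s' := mu_preimage_null μ hinv hμXc hBm hs'X hpre (Set.subset_preimage_image T s')
    _ = ∫⁻ x in s', ρ x ∂m' := (Measure.setLIntegral_rnDeriv' hac hs'm).symm
    _ = ∫⁻ x in s, ρ x ∂m' := (setLIntegral_congr hss'.symm)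

end IET8

/-- for a topologically transitive IET and an ACIP `μ ≠ m`, every
representative of the density is discontinuous everywhere and `supp μ = [0,1)`. -/
theorem stmt8 (T : ℝ → ℝ) (hT : IsIET T)
    (m : Measure ℝ) (hm : m = volume.restrict (Set.Ico 0 1))
    (htrans : ∀ U V : Set ℝ, RelOpen (Set.Ico (0:ℝ) 1) U → U.Nonempty →
      RelOpen (Set.Ico (0:ℝ) 1) V → V.Nonempty →
      ∃ n : ℤ, (iterImage (Set.Ico (0:ℝ) 1) T n U ∩ V).Nonempty)
    (μ : Measure ℝ) (hμp : IsProbabilityMeasure μ) (hac : μ ≪ m)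
    (hinv : ∀ A : Set ℝ, MeasurableSet A → μ (T ⁻¹' A) = μ A) (hne : μ ≠ m) :
    (∀ φ : ℝ → ℝ, (∀ᵐ x ∂m, φ x = (μ.rnDeriv m x).toReal) →
      ∀ x ∈ Set.Ico (0:ℝ) 1, ¬ ContinuousWithinAt φ (Set.Ico (0:ℝ) 1) x) ∧
    (∀ U : Set ℝ, RelOpen (Set.Ico (0:ℝ) 1) U → U.Nonempty → 0 < μ U) := by
  obtain ⟨hbij, hmeas, r, β, γ, hmono, hb0, hb1, heq⟩ := hT
  set d : IET8.Data T := ⟨r, β, γ, hmono, hb0, hb1, heq, hbij, hmeas⟩ with hd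
  subst hm
  have htr : IET8.Htrans T := htrans
  have hμXc : μ (IET8.X)ᶜ = 0 := hac IET8.m'_compl_X
  have hpreiter : ∀ p : ℕ, ∀ A : Set ℝ, MeasurableSet A → μ (T^[p] ⁻¹' A) = μ A := by
    intro p
    induction p with
    | zero => intro A _; simp
    | succ n ih =>
        intro A hA
        rw [Function.iterate_succ', Set.preimage_comp, ih _ (hmeas hA), hinv A hA]
  constructor
  · -- Part 1 : no continuous representative of the density
    intro ψ hψ x₀ hx₀ hcont
    set m' := volume.restrict (Set.Ico (0:ℝ) 1) with hm'
    set ρ := μ.rnDeriv m' with hρdef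
    set σ := fun x => (ρ x).toReal with hσdef
    set v := ψ x₀ with hv
    have hconf : ∀ ε : ℝ, 0 < ε → ∀ᵐ x ∂m', |σ x - v| < ε := by
      intro ε hε
      obtain ⟨δ, hδ, hball⟩ := Metric.continuousWithinAt_iff.1 hcont (ε/2) (by linarith)
      set V := IET8.X ∩ Metric.ball x₀ δ with hV
      have hVrel : RelOpen (Set.Ico (0:ℝ) 1) V := ⟨Metric.ball x₀ δ, Metric.isOpen_ball, rfl⟩
      have hVne : V.Nonempty := ⟨x₀, hx₀, Metric.mem_ball_self hδ⟩
      have hVX : V ⊆ IET8.X := Set.inter_subset_left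
      have hσT : ∀ᵐ x ∂m', σ (T x) = σ x := by
        filter_upwards [d.rnDeriv_T_inv μ hac hinv] with x hx
        exact congrArg ENNReal.toReal hx
      have hN0 : m' ({x | ψ x ≠ σ x} ∪ {x | σ (T x) ≠ σ x}) = 0 :=
        measure_union_null (ae_iff.1 hψ) (ae_iff.1 hσT)
      set N' := toMeasurable m' ({x | ψ x ≠ σ x} ∪ {x | σ (T x) ≠ σ x}) with hN'
      have hN'm : MeasurableSet N' := measurableSet_toMeasurable _ _
      have hN'0 : m' N' = 0 := by rw [hN', measure_toMeasurable]; exact hN0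
      have hsubN' : ({x | ψ x ≠ σ x} ∪ {x | σ (T x) ≠ σ x}) ⊆ N' := subset_toMeasurable _ _
      set W := IET8.X ∩ N' with hW
      have hWm : MeasurableSet W := IET8.measurableSet_X.inter hN'm
      have hWX : W ⊆ IET8.X := Set.inter_subset_left
      have hWnull : volume W = 0 := by
        have h2 : m' W = 0 := measure_mono_null Set.inter_subset_right hN'0
        rwa [IET8.m'_apply, Set.inter_eq_self_of_subset_left hWX] at h2
      set Bad := (⋃ p : ℕ, T^[p] ⁻¹' N') ∪ ⋃ p : ℕ, ⋃ q : ℕ, T^[p] ⁻¹' (T^[q] '' W)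
        with hBad
      have hBadnull : m' Bad = 0 := by
        apply measure_union_null
        · exact measure_iUnion_null (fun p => d.m'_preserve_null p hN'0)
        · refine measure_iUnion_null (fun p => measure_iUnion_null (fun q => ?_))
          have hTqW : m' (T^[q] '' W) = 0 := by
            rw [IET8.m'_apply]
            exact measure_mono_null Set.inter_subset_left (d.null_image_iter q hWX hWnull)
          exact d.m'_preserve_null p hTqW
      have haeX : ∀ᵐ x ∂m', x ∈ IET8.X := ae_restrict_mem IET8.measurableSet_X
      have haeOrb : ∀ᵐ x ∂m', x ∉ IET8.X \ IET8.orb V T := by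
        refine measure_eq_zero_iff_ae_notMem.1 ?_
        rw [IET8.m'_apply]
        exact measure_mono_null Set.inter_subset_left (IET8.orb_conull d hVrel hVne htr)
      have haeBad : ∀ᵐ x ∂m', x ∉ Bad := measure_eq_zero_iff_ae_notMem.1 hBadnull
      filter_upwards [haeX, haeOrb, haeBad] with x hxX hxOrb hxBad
      have hxorb : x ∈ IET8.orb V T := by
        by_contra h
        exact hxOrb ⟨hxX, h⟩
      obtain ⟨-, p, q, hpq⟩ := hxorb
      obtain ⟨w, hwV, hwq⟩ := hpq
      have hxN : ∀ k : ℕ, T^[k] x ∉ N' :=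
        fun k hk => hxBad (Or.inl (Set.mem_iUnion.2 ⟨k, hk⟩))
      have hchain1 : ∀ k : ℕ, σ (T^[k] x) = σ x := by
        intro k
        induction k with
        | zero => simp
        | succ n ih =>
            rw [Function.iterate_succ_apply']
            have hmem : T^[n] x ∉ {x | σ (T x) ≠ σ x} :=
              fun h => hxN n (hsubN' (Or.inr h))
            have h2 : σ (T (T^[n] x)) = σ (T^[n] x) := not_ne_iff.1 hmem
            rw [h2, ih]
      have hwW : ∀ k : ℕ, k ≤ q → T^[k] w ∉ N' := by
        intro k hk hkN
        have hwkW : T^[k] w ∈ W := ⟨(d.bijOn_iter k).mapsTo (hVX hwV), hkN⟩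
        have hx2 : T^[p] x ∈ T^[q - k] '' W := by
          refine ⟨T^[k] w, hwkW, ?_⟩
          rw [← Function.iterate_add_apply, Nat.sub_add_cancel hk, hwq]
        exact hxBad (Or.inr (Set.mem_iUnion.2 ⟨p,
          Set.mem_iUnion.2 ⟨q - k, Set.mem_preimage.2 hx2⟩⟩))
      have hchain2 : ∀ j : ℕ, j ≤ q → σ (T^[j] w) = σ w := by
        intro j
        induction j with
        | zero => intro _; simp
        | succ n ih =>
            intro hn
            rw [Function.iterate_succ_apply']
            have hmem : T^[n] w ∉ N' := hwW n (by omega)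
            have h2 : σ (T (T^[n] w)) = σ (T^[n] w) :=
              not_ne_iff.1 (fun h => hmem (hsubN' (Or.inr h)))
            rw [h2, ih (by omega)]
      have hψw : ψ w = σ w :=
        not_ne_iff.1 (fun h => hwW 0 (Nat.zero_le _) (by simpa using hsubN' (Or.inl h)))
      have hwdist : |ψ w - v| < ε/2 := by
        have hd1 := hball (hVX hwV) (Metric.mem_ball.1 hwV.2)
        rwa [Real.dist_eq] at hd1
      have hσxw : σ x = ψ w := by
        calc σ x = σ (T^[p] x) := (hchain1 p).symm
          _ = σ (T^[q] w) := by rw [hwq]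
          _ = σ w := hchain2 q le_rfl
          _ = ψ w := hψw.symm
      rw [hσxw]
      linarith [hwdist]
    have hσv : ∀ᵐ x ∂m', σ x = v := by
      have h1 : ∀ᵐ x ∂m', ∀ n : ℕ, |σ x - v| < 1/(n+1) :=
        ae_all_iff.2 (fun n => hconf _ (by positivity))
      filter_upwards [h1] with x hx
      by_contra h
      have habs : 0 < |σ x - v| := abs_pos.2 (sub_ne_zero.2 h)
      obtain ⟨n, hn⟩ := exists_nat_one_div_lt habs
      exact absurd (hx n) (not_lt.2 (le_of_lt hn))
    have hρfin : ∀ᵐ x ∂m', ρ x < ⊤ := Measure.rnDeriv_lt_top μ m'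
    have hρv : ρ =ᵐ[m'] (fun _ => ENNReal.ofReal v) := by
      filter_upwards [hσv, hρfin] with x h1 h2
      rw [← h1]
      exact (ENNReal.ofReal_toReal h2.ne).symm
    have hint : ∫⁻ x, ρ x ∂m' = 1 := by
      rw [Measure.lintegral_rnDeriv hac]
      exact hμp.measure_univ
    have hv1 : ENNReal.ofReal v = 1 := by
      rw [lintegral_congr_ae hρv, lintegral_const, IET8.m'_univ, mul_one] at hint
      exact hint
    apply hne
    rw [← Measure.withDensity_rnDeriv_eq μ m' hac]
    have hρ1 : ρ =ᵐ[m'] (fun _ => (1:ENNReal)) :=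
      hρv.trans (Filter.Eventually.of_forall (fun x => hv1))
    rw [withDensity_congr_ae hρ1]
    exact withDensity_one
  · -- Part 2 : full support
    intro U hUrel hUne
    rw [pos_iff_ne_zero]
    intro hU0
    have hUX : U ⊆ IET8.X := IET8.relOpen_subset hUrel
    have hUm : MeasurableSet U := IET8.relOpen_meas hUrel
    have himg : ∀ q : ℕ, μ (T^[q] '' U) = 0 := by
      intro q
      induction q with
      | zero => simpa using hU0
      | succ n ih =>
          rw [Function.iterate_succ', Set.image_comp,
            d.mu_image μ hinv hμXc (d.image_iter_subset_X hUX n)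
              (d.measurable_image_iter hUX hUm n)]
          exact ih
    have hW : μ (⋃ q : ℕ, T^[q] '' U) = 0 := measure_iUnion_null himg
    have hWm : MeasurableSet (⋃ q : ℕ, T^[q] '' U) :=
      MeasurableSet.iUnion (d.measurable_image_iter hUX hUm)
    have horb0 : μ (IET8.orb U T) = 0 := by
      rw [IET8.orb_eq_iUnion d]
      refine measure_iUnion_null (fun p => ?_)
      refine measure_mono_null Set.inter_subset_left ?_
      rw [hpreiter p _ hWm]
      exact hW
    have hcompl : μ (IET8.X \ IET8.orb U T) = 0 := by
      apply hac
      rw [IET8.m'_apply]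
      exact measure_mono_null Set.inter_subset_left (IET8.orb_conull d hUrel hUne htr)
    have huniv : μ Set.univ = 0 := by
      have hcover : (Set.univ : Set ℝ) ⊆
          (IET8.X)ᶜ ∪ ((IET8.X \ IET8.orb U T) ∪ IET8.orb U T) := by
        intro x _
        by_cases hX : x ∈ IET8.X
        · by_cases ho : x ∈ IET8.orb U T
          · exact Or.inr (Or.inr ho)
          · exact Or.inr (Or.inl ⟨hX, ho⟩)
        · exact Or.inl hX
      refine le_antisymm ?_ zero_le
      calc μ Set.univ ≤ μ ((IET8.X)ᶜ ∪ ((IET8.X \ IET8.orb U T) ∪ IET8.orb U T)) :=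
            measure_mono hcover
        _ ≤ μ (IET8.X)ᶜ + (μ (IET8.X \ IET8.orb U T) + μ (IET8.orb U T)) :=
            le_trans (measure_union_le _ _) (by
              exact add_le_add le_rfl (measure_union_le _ _))
        _ = 0 := by rw [hμXc, hcompl, horb0]; simp
    rw [hμp.measure_univ] at huniv
    exact one_ne_zero huniv
end
end

section
/- Let X ⊂ ℝ^d be compact and f : X → X a piecewise invertible area preserving map with topological partition P = {ω_0,…,ω_{r−1}} such that f restricted to the interior of each ω_i is bi-Lipschitz. If m(closure(X⁺)) = 0, where X⁺ := ∩_{i=0}^∞ f^i(X), then f admits no absolutely continuous invariant probability measure, i.e., M_I(f) = ∅. -/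
open MeasureTheory Set Function Metric Filter Topology

noncomputable section

/-- for a piecewise invertible PAP, bi-Lipschitz on atom interiors,
if `m(closure X⁺) = 0` then `f` has no ACIP: `M_I(f) = ∅`. -/
theorem stmt12 {d r : ℕ} (X : Set (Euc d)) (hXc : IsCompact X)
    (f : Euc d → Euc d) (ω : Fin r → Set (Euc d))
    (m : Measure (Euc d)) (hm : m = (volume X)⁻¹ • volume.restrict X)
    (hpart : IsTopPartition X ω) (hPAP : IsPAP X f ω m)
    (hinj : ∀ i, InjOn f (ω i))
    (hbilip : ∀ i, ∃ K K' : NNReal, LipschitzOnWith K f (interior (ω i)) ∧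
      ∀ x ∈ interior (ω i), ∀ y ∈ interior (ω i), dist x y ≤ K' * dist (f x) (f y))
    (h0 : m (closure (⋂ n : ℕ, f^[n] '' X)) = 0) :
    ¬ ∃ μ : Measure (Euc d), IsProbabilityMeasure μ ∧ μ ≪ m ∧
      ∀ A : Set (Euc d), MeasurableSet A → μ (f ⁻¹' A) = μ A := by
  rintro ⟨μ, hprob, hac, hinv⟩
  have hXm : MeasurableSet X := hXc.isClosed.measurableSet
  -- volume-null sets are m-null
  have hmX0 : ∀ s : Set (Euc d), volume s = 0 → m s = 0 := by
    intro s hs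
    rw [hm]
    simp only [Measure.smul_apply, smul_eq_mul]
    have h1 : volume.restrict X s ≤ volume s := Measure.restrict_le_self s
    rw [hs] at h1
    simp [le_antisymm h1 zero_le]
  -- μ X = 1
  have hmXc : m Xᶜ = 0 := by
    rw [hm]
    simp only [Measure.smul_apply, smul_eq_mul]
    rw [Measure.restrict_apply hXm.compl]
    simp
  have hμXc : μ Xᶜ = 0 := hac hmXc
  have hμX : μ X = 1 := (prob_compl_eq_zero_iff hXm).mp hμXc
  -- the null set N covering the images of the frontiers
  set F : Set (Euc d) := ⋃ i, f '' (frontier (ω i)) with hF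
  have hmF : m F = 0 := by
    refine measure_iUnion_null fun i => ?_
    exact (hPAP.2.2.1 (frontier (ω i)) isClosed_frontier.measurableSet
      (hmX0 _ (hpart.2.2.2 i))).2
  set N : Set (Euc d) := toMeasurable m F with hN
  have hNm : MeasurableSet N := measurableSet_toMeasurable m F
  have hμN : μ N = 0 := hac (by rw [hN, measure_toMeasurable]; exact hmF)
  -- one step of pushing a full-measure Borel subset of X forward
  have step : ∀ A : Set (Euc d), MeasurableSet A → A ⊆ X → μ A = 1 →
      MeasurableSet (⋃ i, f '' (A ∩ interior (ω i))) ∧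
      (⋃ i, f '' (A ∩ interior (ω i))) ⊆ f '' A ∧
      μ (⋃ i, f '' (A ∩ interior (ω i))) = 1 := by
    intro A hAm hAX hA1
    set A' : Set (Euc d) := ⋃ i, f '' (A ∩ interior (ω i)) with hA'
    have hA'm : MeasurableSet A' := by
      refine MeasurableSet.iUnion fun i => ?_
      refine (hAm.inter isOpen_interior.measurableSet).image_of_continuousOn_injOn
        ?_ ?_
      · exact ((hPAP.2.2.2.1 i).continuousOn).mono inter_subset_right
      · exact (hinj i).mono (inter_subset_right.trans interior_subset)
    have hA'sub : A' ⊆ f '' A := by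
      refine iUnion_subset fun i => image_mono inter_subset_left
    have hcover : f '' A ⊆ A' ∪ N := by
      rintro _ ⟨x, hxA, rfl⟩
      have hxX : x ∈ X := hAX hxA
      rw [← hpart.2.1] at hxX
      obtain ⟨i, hxi⟩ := mem_iUnion.mp hxX
      by_cases hxint : x ∈ interior (ω i)
      · exact Or.inl (mem_iUnion.mpr ⟨i, mem_image_of_mem f ⟨hxA, hxint⟩⟩)
      · refine Or.inr (subset_toMeasurable m F ?_)
        refine mem_iUnion.mpr ⟨i, mem_image_of_mem f ⟨subset_closure hxi, hxint⟩⟩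
    have hB : μ (A' ∪ N) = 1 := by
      have hBm : MeasurableSet (A' ∪ N) := hA'm.union hNm
      have h1 : μ A ≤ μ (f ⁻¹' (A' ∪ N)) := by
        refine measure_mono fun x hx => ?_
        exact hcover (mem_image_of_mem f hx)
      rw [hinv _ hBm, hA1] at h1
      exact le_antisymm prob_le_one h1
    have : (1 : ENNReal) ≤ μ A' + μ N := hB ▸ measure_union_le A' N
    rw [hμN, add_zero] at this
    exact ⟨hA'm, hA'sub, le_antisymm prob_le_one this⟩
  -- the sequence of Borel full-measure approximations of f^[n] '' X
  set G : ℕ → Set (Euc d) :=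
    fun n => Nat.rec X (fun _ A => ⋃ i, f '' (A ∩ interior (ω i))) n with hG
  have key : ∀ n, MeasurableSet (G n) ∧ G n ⊆ X ∧ μ (G n) = 1 ∧
      G n ⊆ f^[n] '' X := by
    intro n
    induction n with
    | zero => exact ⟨hXm, fun _ h => h, hμX, by simp only [Function.iterate_zero, Set.image_id]; exact fun _ h => h⟩
    | succ n ih =>
      obtain ⟨h1, h2, h3, h4⟩ := ih
      obtain ⟨s1, s2, s3⟩ := step (G n) h1 h2 h3
      have himg : f '' G n ⊆ f^[n + 1] '' X := by
        rw [Function.iterate_succ', image_comp]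
        exact image_mono h4
      refine ⟨s1, ?_, s3, s2.trans himg⟩
      exact (s2.trans (image_mono h2)).trans (hPAP.1.image_subset)
  -- conclude
  have hiInter : μ (⋂ n, G n) = 1 := by
    have hm' : MeasurableSet (⋂ n, G n) := MeasurableSet.iInter fun n => (key n).1
    refine (prob_compl_eq_zero_iff hm').mp ?_
    rw [compl_iInter]
    exact measure_iUnion_null fun n =>
      (prob_compl_eq_zero_iff (key n).1).mpr (key n).2.2.1
  have hsub : (⋂ n, G n) ⊆ closure (⋂ n : ℕ, f^[n] '' X) :=
    (iInter_mono fun n => (key n).2.2.2).trans subset_closure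
  have : (1 : ENNReal) ≤ μ (closure (⋂ n : ℕ, f^[n] '' X)) :=
    hiInter ▸ measure_mono hsub
  rw [hac h0] at this
  simp at this
end
end
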